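/- arXiv:1012.5350 — 9 statements merged into one kernel-verified Lean document; each statement's English description precedes it below -/
import Mathlib

section
/- Points s₁,…,sₙ (n ≥ 2) of a finite-dimensional compact convex set S are distinguishable if and only if there exist supporting hyperplanes H₁,…,Hₙ of S whose normal vectors are linearly dependent and such that sᵢ ∉ Hᵢ and sᵢ ∈ Hⱼ for all i ≠ j. -/
noncomputable section

def innerAff {d : ℕ} (v : EuclideanSpace ℝ (Fin d)) (c : ℝ) :
    EuclideanSpace ℝ (Fin d) →ᵃ[ℝ] ℝ where
  toFun := fun x => c - inner ℝ v x
  linear := -((innerSL ℝ v : EuclideanSpace ℝ (Fin d) →L[ℝ] ℝ) :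
      EuclideanSpace ℝ (Fin d) →ₗ[ℝ] ℝ)
  map_vadd' := by
    intro p u
    simp [inner_add_right]
    ring

/-- The points `s 0, …, s (k-1)` of the convex set `S` are distinguishable: there are affine
functionals `e i` that are nonnegative on `S`, sum to `1` on `S`, and satisfy `e i (s i) = 1`. -/
def Distinguishable {E : Type*} [NormedAddCommGroup E] [NormedSpace ℝ E]
    (S : Set E) {k : ℕ} (s : Fin k → E) : Prop :=
  ∃ e : Fin k → (E →ᵃ[ℝ] ℝ),
    (∀ i, ∀ x ∈ S, 0 ≤ e i x) ∧ (∀ x ∈ S, ∑ i, e i x = 1) ∧ (∀ i, e i (s i) = 1)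

/-- Theorem: points of a finite-dimensional compact convex set are distinguishable iff there are
supporting hyperplanes `Hᵢ = {x | ⟪vᵢ,x⟫ = cᵢ}` with linearly dependent normal vectors such that
`sᵢ ∉ Hᵢ` and `sᵢ ∈ Hⱼ` for all `i ≠ j`. -/
theorem distinguishable_iff_supporting_hyperplanes {d n : ℕ} (hn : 2 ≤ n)
    (S : Set (EuclideanSpace ℝ (Fin d))) (hScompact : IsCompact S) (hSconvex : Convex ℝ S)
    (s : Fin n → EuclideanSpace ℝ (Fin d)) (hs : ∀ i, s i ∈ S) :
    Distinguishable S s ↔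
      ∃ (v : Fin n → EuclideanSpace ℝ (Fin d)) (c : Fin n → ℝ),
        (∀ i, v i ≠ 0) ∧ ¬ LinearIndependent ℝ v ∧
        (∀ i, ∃ x ∈ S, (inner ℝ (v i) x : ℝ) = c i) ∧
        (∀ i, ∀ x ∈ S, (inner ℝ (v i) x : ℝ) ≤ c i) ∧
        (∀ i, (inner ℝ (v i) (s i) : ℝ) ≠ c i) ∧
        (∀ i j, i ≠ j → (inner ℝ (v j) (s i) : ℝ) = c j) := by
  constructor
  · rintro ⟨e, he0, he1, hes⟩
    have hzero : ∀ i j, i ≠ j → e i (s j) = 0 := by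
      intro i j hij
      have hsum := he1 (s j) (hs j)
      rw [← Finset.add_sum_erase Finset.univ (fun k => e k (s j)) (Finset.mem_univ j),
        hes j] at hsum
      have hrest : ∑ k ∈ Finset.univ.erase j, e k (s j) = 0 := by linarith
      exact (Finset.sum_eq_zero_iff_of_nonneg (fun k _ => he0 k (s j) (hs j))).mp hrest i
        (Finset.mem_erase.mpr ⟨hij, Finset.mem_univ i⟩)
    set a0 := s ⟨0, by omega⟩ with ha0
    set V := vectorSpan ℝ S with hVdef
    set w : Fin n → EuclideanSpace ℝ (Fin d) := fun i =>
      (InnerProductSpace.toDual ℝ _).symm ((e i).linear.toContinuousLinearMap) with hwdef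
    have hw : ∀ i x, (inner ℝ (w i) x : ℝ) = (e i).linear x := by
      intro i x
      simp [hwdef, InnerProductSpace.toDual_symm_apply]
    have hmemV : ∀ x ∈ S, ∀ y ∈ S, x - y ∈ V := fun x hx y hy => vsub_mem_vectorSpan ℝ hx hy
    have horth : ∀ u : EuclideanSpace ℝ (Fin d),
        (∀ x ∈ S, ∀ y ∈ S, (inner ℝ u (x - y) : ℝ) = 0) → u ∈ Vᗮ := by
      intro u hu
      rw [Submodule.mem_orthogonal']
      intro z hz
      rw [hVdef, vectorSpan_def] at hz
      have hle : Submodule.span ℝ (S -ᵥ S) ≤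
          LinearMap.ker ((innerSL ℝ u : EuclideanSpace ℝ (Fin d) →L[ℝ] ℝ) :
            EuclideanSpace ℝ (Fin d) →ₗ[ℝ] ℝ) := by
        rw [Submodule.span_le]
        rintro z ⟨x, hx, y, hy, rfl⟩
        simpa using hu x hx y hy
      simpa using hle hz
    have hwsum : (∑ i, w i) ∈ Vᗮ := by
      apply horth
      intro x hx y hy
      rw [sum_inner]
      have : ∀ i : Fin n, (inner ℝ (w i) (x - y) : ℝ) = e i x - e i y := by
        intro i
        rw [hw]
        have := (e i).linearMap_vsub x y
        simpa using this
      simp_rw [this]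
      rw [Finset.sum_sub_distrib, he1 x hx, he1 y hy, sub_self]
    set v : Fin n → EuclideanSpace ℝ (Fin d) := fun i =>
      -(Submodule.orthogonalProjectionOnto V (w i) : EuclideanSpace ℝ (Fin d)) with hvdef
    set c : Fin n → ℝ := fun i => e i a0 + inner ℝ (v i) a0 with hcdef
    have hinnerV : ∀ i, ∀ y ∈ V, (inner ℝ (v i) y : ℝ) = -(inner ℝ (w i) y : ℝ) := by
      intro i y hy
      have h1 : w i - (Submodule.orthogonalProjectionOnto V (w i) : EuclideanSpace ℝ (Fin d)) ∈ Vᗮ :=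
        Submodule.sub_starProjection_mem_orthogonal (w i)
      have h2 := (Submodule.mem_orthogonal' _ _).mp h1 y hy
      rw [inner_sub_left] at h2
      simp only [hvdef, inner_neg_left]
      linarith
    have hkey : ∀ i, ∀ x ∈ S, (inner ℝ (v i) x : ℝ) = c i - e i x := by
      intro i x hx
      have hme : x - a0 ∈ V := hmemV x hx a0 (hs _)
      have h4 : (inner ℝ (v i) x : ℝ) - inner ℝ (v i) a0 = -(e i x - e i a0) := by
        rw [← inner_sub_right, hinnerV i _ hme, hw]
        congr 1
        have := (e i).linearMap_vsub x a0
        simpa using this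
      simp only [hcdef]
      linarith
    have h01 : (⟨1, by omega⟩ : Fin n) ≠ ⟨0, by omega⟩ := by
      simp [Fin.ext_iff]
    set jj : Fin n → Fin n := fun i =>
      if i = ⟨0, by omega⟩ then ⟨1, by omega⟩ else ⟨0, by omega⟩ with hjjdef
    have hjj : ∀ i, jj i ≠ i := by
      intro i
      simp only [hjjdef]
      split
      · rename_i h; rw [h]; exact h01
      · rename_i h; exact fun hh => h hh.symm
    have hvne : ∀ i, v i ≠ 0 := by
      intro i hvi
      have hproj : (Submodule.orthogonalProjectionOnto V (w i) : EuclideanSpace ℝ (Fin d)) = 0 := by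
        have := hvi
        simp only [hvdef, neg_eq_zero] at this
        exact this
      have hwiV : w i ∈ Vᗮ := by
        have h1 : w i - (Submodule.orthogonalProjectionOnto V (w i) : EuclideanSpace ℝ (Fin d)) ∈ Vᗮ :=
          Submodule.sub_starProjection_mem_orthogonal (K := V) (w i)
        rwa [hproj, sub_zero] at h1
      have hmem : s (jj i) - s i ∈ V := hmemV _ (hs _) _ (hs i)
      have h0 : (inner ℝ (w i) (s (jj i) - s i) : ℝ) = 0 :=
        (Submodule.mem_orthogonal' _ _).mp hwiV _ hmem
      rw [hw] at h0
      have h5 := (e i).linearMap_vsub (s (jj i)) (s i)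
      simp only [vsub_eq_sub] at h5
      rw [h5, hes i, hzero i (jj i) (Ne.symm (hjj i))] at h0
      norm_num at h0
    have hvsum : ∑ i, v i = 0 := by
      have hz : Submodule.orthogonalProjectionOnto V (∑ i, w i) = 0 :=
        Submodule.orthogonalProjectionOnto_apply_of_mem_orthogonal hwsum
      have h6 : ∑ i, Submodule.orthogonalProjectionOnto V (w i) = 0 := by
        rw [← map_sum, hz]
      have h7 : ∑ i, (Submodule.orthogonalProjectionOnto V (w i) : EuclideanSpace ℝ (Fin d)) = 0 := by
        rw [← Submodule.coe_sum, h6, Submodule.coe_zero]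
      simp only [hvdef]
      rw [Finset.sum_neg_distrib, h7, neg_zero]
    refine ⟨v, c, hvne, ?_, ?_, ?_, ?_, ?_⟩
    · intro hli
      have := Fintype.linearIndependent_iff.mp hli (fun _ => 1) (by simpa using hvsum)
        ⟨0, by omega⟩
      norm_num at this
    · intro i
      exact ⟨s (jj i), hs _, by
        rw [hkey i _ (hs _), hzero i (jj i) (Ne.symm (hjj i))]; ring⟩
    · intro i x hx
      have := he0 i x hx
      rw [hkey i x hx]
      linarith
    · intro i
      rw [hkey i _ (hs i), hes i]
      intro h
      linarith
    · intro i j hij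
      rw [hkey j _ (hs i), hzero j i (Ne.symm hij)]
      ring
  · rintro ⟨v, c, hv0, hvli, hmeet, hle, hne, heq⟩
    obtain ⟨l, hlsum, i0, hl0⟩ := Fintype.not_linearIndependent_iff.mp hvli
    set D : Fin n → ℝ := fun i => c i - inner ℝ (v i) (s i) with hDdef
    have hD : ∀ i, 0 < D i := fun i =>
      sub_pos.mpr (lt_of_le_of_ne (hle i (s i) (hs i)) (hne i))
    have hconst : ∀ x, ∑ j, l j * (c j - inner ℝ (v j) x) = ∑ j, l j * c j := by
      intro x
      have h3 : ∑ j, l j * (inner ℝ (v j) x : ℝ) = 0 := by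
        have h4 : (inner ℝ (∑ j, l j • v j) x : ℝ) = 0 := by rw [hlsum]; exact inner_zero_left x
        rw [sum_inner] at h4
        simp_rw [real_inner_smul_left] at h4
        exact h4
      simp_rw [mul_sub]
      rw [Finset.sum_sub_distrib, h3, sub_zero]
    set C : ℝ := ∑ j, l j * c j with hCdef
    have hCk : ∀ i, l i * D i = C := by
      intro i
      rw [← hconst (s i), Finset.sum_eq_single i
        (fun j _ hji => by rw [heq i j (Ne.symm hji)]; ring)
        (fun h => absurd (Finset.mem_univ i) h)]
    have hC0 : C ≠ 0 := by
      rw [← hCk i0]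
      exact mul_ne_zero hl0 (ne_of_gt (hD i0))
    have hinv : ∀ i, (D i)⁻¹ = l i / C := by
      intro i
      rw [eq_div_iff hC0, ← hCk i, mul_comm (l i), ← mul_assoc,
        inv_mul_cancel₀ (ne_of_gt (hD i)), one_mul]
    refine ⟨fun i => (D i)⁻¹ • innerAff (v i) (c i), ?_, ?_, ?_⟩
    · intro i x hx
      show 0 ≤ (D i)⁻¹ * (c i - inner ℝ (v i) x)
      have := hle i x hx
      exact mul_nonneg (inv_nonneg.mpr (hD i).le) (by linarith)
    · intro x hx
      show ∑ i, (D i)⁻¹ * (c i - inner ℝ (v i) x) = 1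
      simp_rw [hinv, div_mul_eq_mul_div]
      rw [← Finset.sum_div, hconst x, div_self hC0]
    · intro i
      show (D i)⁻¹ * (c i - inner ℝ (v i) (s i)) = 1
      exact inv_mul_cancel₀ (ne_of_gt (hD i))
end
end

section
/- If S is a convex set of finite dimension n and s₁,…,s_k ∈ S are distinguishable, then k ≤ n + 1. Moreover, if k = n + 1, then S equals the convex hull of {s₁,…,s_k} and is an n-dimensional simplex. -/
noncomputable section

/-- Theorem: at most `n + 1` points of an `n`-dimensional convex set can be distinguishable, and
if there are exactly `n + 1` of them then `S` is their convex hull, an `n`-dimensional simplex. -/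
theorem distinguishable_card_le {d n k : ℕ} (S : Set (EuclideanSpace ℝ (Fin d)))
    (hSconvex : Convex ℝ S)
    (hdim : Module.finrank ℝ (affineSpan ℝ S).direction = n)
    (s : Fin k → EuclideanSpace ℝ (Fin d)) (hs : ∀ j, s j ∈ S)
    (hdist : Distinguishable S s) :
    k ≤ n + 1 ∧
      (k = n + 1 → AffineIndependent ℝ s ∧ S = convexHull ℝ (Set.range s)) := by
  obtain ⟨e, he0, he1, hei⟩ := hdist
  -- e i (s j) = δ_{ij}
  have hδ : ∀ i j : Fin k, e i (s j) = if i = j then 1 else 0 := by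
    intro i j
    rcases eq_or_ne i j with rfl | hij
    · simp [hei]
    · simp only [if_neg hij]
      have hsum := he1 (s j) (hs j)
      have h0 : ∑ m ∈ Finset.univ.erase j, e m (s j) = 0 := by
        have hadd := Finset.add_sum_erase Finset.univ (fun m => e m (s j))
          (Finset.mem_univ j)
        rw [hei j] at hadd
        linarith
      exact (Finset.sum_eq_zero_iff_of_nonneg
        (fun m _ => he0 m _ (hs j))).mp h0 i
        (Finset.mem_erase.mpr ⟨hij, Finset.mem_univ i⟩)
  -- affine independence
  have hindep : AffineIndependent ℝ s := by
    rw [affineIndependent_iff_of_fintype]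
    intro w hw hvs i
    rw [Finset.weightedVSub_eq_linear_combination _ hw] at hvs
    have hl : (e i).linear (∑ j, w j • s j) = ∑ j, w j * e i (s j) - ∑ j, w j * e i 0 := by
      rw [map_sum]
      rw [← Finset.sum_sub_distrib]
      congr 1
      ext j
      rw [map_smul]
      have : e i (s j) = (e i).linear (s j) + e i 0 := by
        conv_lhs => rw [AffineMap.decomp (e i)]
        simp
      rw [this]
      ring_nf
    rw [hvs, map_zero] at hl
    have hwi : ∑ j, w j * e i (s j) = w i := by
      simp only [hδ, mul_ite, mul_one, mul_zero]
      simp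
    rw [hwi, ← Finset.sum_mul, hw, zero_mul] at hl
    linarith
  -- vectorSpan of s is inside direction of affineSpan S
  have hle : vectorSpan ℝ (Set.range s) ≤ (affineSpan ℝ S).direction := by
    rw [← direction_affineSpan]
    exact AffineSubspace.direction_le (affineSpan_mono ℝ (by
      rintro _ ⟨j, rfl⟩; exact hs j))
  have hcard : k ≤ n + 1 := by
    rcases Nat.eq_zero_or_pos k with rfl | hk
    · omega
    · have hfr : Module.finrank ℝ (vectorSpan ℝ (Set.range s)) = k - 1 :=
        hindep.finrank_vectorSpan (by simp [Fintype.card_fin]; omega)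
      have := Submodule.finrank_mono hle
      rw [hfr, hdim] at this
      omega
  refine ⟨hcard, fun hk => ⟨hindep, ?_⟩⟩
  -- k = n + 1 case
  subst hk
  have hfr : Module.finrank ℝ (vectorSpan ℝ (Set.range s)) = n :=
    hindep.finrank_vectorSpan (by simp)
  have hdireq : vectorSpan ℝ (Set.range s) = (affineSpan ℝ S).direction :=
    Submodule.eq_of_le_of_finrank_eq hle (by rw [hfr, hdim])
  have hne : Nonempty (Fin (n + 1)) := ⟨0⟩
  have hspaneq : affineSpan ℝ (Set.range s) = affineSpan ℝ S := by
    apply AffineSubspace.ext_of_direction_eq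
    · rw [direction_affineSpan, hdireq]
    · exact ⟨s 0, mem_affineSpan ℝ ⟨0, rfl⟩, subset_affineSpan ℝ S (hs 0)⟩
  apply le_antisymm
  · intro x hx
    have hxspan : x ∈ affineSpan ℝ (Set.range s) := by
      rw [hspaneq]; exact subset_affineSpan ℝ S hx
    obtain ⟨w, hw, hxw⟩ := eq_affineCombination_of_mem_affineSpan_of_fintype hxspan
    have hwi : ∀ i, w i = e i x := by
      intro i
      have := Finset.map_affineCombination Finset.univ s w hw (e i)
      rw [← hxw] at this
      rw [this, Finset.affineCombination_eq_linear_combination _ _ _ hw]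
      simp only [Function.comp_apply, hδ, smul_eq_mul, mul_ite, mul_one, mul_zero]
      simp
    rw [hxw]
    exact affineCombination_mem_convexHull
      (fun i _ => by rw [hwi i]; exact he0 i x hx) hw
  · exact convexHull_min (by rintro _ ⟨j, rfl⟩; exact hs j) hSconvex
end
end

section
/- Let S be an n-dimensional convex set with n ≥ 1 that is distinguishably n-decomposable. Then the set of extreme points of S is uncountably infinite. -/
noncomputable section

lemma aux_interior_empty {E : Type*} [NormedAddCommGroup E] [NormedSpace ℝ E]
    (P Q : AffineSubspace ℝ E) (v : E) (hvP : v ∈ P.direction) (hvQ : v ∉ Q.direction) :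
    interior ((Subtype.val : P → E) ⁻¹' (Q : Set E)) = ∅ := by
  by_contra h
  obtain ⟨y, hy⟩ := Set.nonempty_iff_ne_empty.2 h
  obtain ⟨ε, hε, hball⟩ := Metric.mem_nhds_iff.1 (mem_interior_iff_mem_nhds.1 hy)
  have hv0 : v ≠ 0 := fun h0 => hvQ (h0 ▸ Q.direction.zero_mem)
  set t : ℝ := ε / (2 * ‖v‖) with ht
  have hvn : 0 < ‖v‖ := norm_pos_iff.2 hv0
  have ht0 : 0 < t := div_pos hε (by positivity)
  have hzmem : t • v +ᵥ (y : E) ∈ P :=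
    AffineSubspace.vadd_mem_of_mem_direction (P.direction.smul_mem t hvP) y.2
  set z : P := ⟨t • v +ᵥ (y : E), hzmem⟩ with hz
  have hdist : dist z y < ε := by
    rw [Subtype.dist_eq]
    simp only [hz, vadd_eq_add, dist_add_self_left]
    rw [norm_smul, Real.norm_eq_abs, abs_of_pos ht0, ht]
    rw [div_mul_eq_mul_div, div_lt_iff₀ (by positivity)]
    nlinarith
  have hzQ : (z : E) ∈ Q := hball hdist
  have hyQ : (y : E) ∈ Q := (interior_subset hy : _ ∈ Subtype.val ⁻¹' (Q : Set E))
  have : (z : E) -ᵥ (y : E) ∈ Q.direction := AffineSubspace.vsub_mem_direction hzQ hyQ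
  have htv : t • v ∈ Q.direction := by simpa [hz] using this
  exact hvQ (by simpa [smul_smul, inv_mul_cancel₀ ht0.ne'] using Q.direction.smul_mem t⁻¹ htv)

/-- `S` is distinguishably `n`-decomposable: every point of `S` is a convex combination of at
most `n` distinguishable extreme points of `S`. -/
def DistinguishablyNDecomposable {E : Type*} [NormedAddCommGroup E] [NormedSpace ℝ E]
    (S : Set E) (n : ℕ) : Prop :=
  ∀ x ∈ S, ∃ (k : ℕ) (s : Fin k → E) (l : Fin k → ℝ),
    0 < k ∧ k ≤ n ∧ (∀ j, s j ∈ Set.extremePoints ℝ S) ∧ Distinguishable S s ∧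
    (∀ j, 0 ≤ l j) ∧ (∑ j, l j = 1) ∧ (∑ j, l j • s j = x)

/-- Theorem: an `n`-dimensional (`n ≥ 1`) distinguishably `n`-decomposable convex set has
uncountably many extreme points. -/
theorem n_decomposable_uncountable_extremePoints {d n : ℕ} (hn : 1 ≤ n)
    (S : Set (EuclideanSpace ℝ (Fin d))) (hSconvex : Convex ℝ S)
    (hdim : Module.finrank ℝ (affineSpan ℝ S).direction = n)
    (hdec : DistinguishablyNDecomposable S n) :
    ¬ (Set.extremePoints ℝ S).Countable := by
  classical
  intro hC
  -- S is nonempty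
  have hSne : S.Nonempty := by
    rcases S.eq_empty_or_nonempty with h | h
    · exfalso
      rw [h] at hdim
      rw [AffineSubspace.span_empty, AffineSubspace.direction_bot, finrank_bot] at hdim
      omega
    · exact h
  -- every point of S lies in the affine span of a small finite set of extreme points
  have hcover : ∀ x ∈ S, ∃ A : Finset (EuclideanSpace ℝ (Fin d)),
      ↑A ⊆ Set.extremePoints ℝ S ∧ A.card ≤ n ∧
      x ∈ affineSpan ℝ (↑A : Set (EuclideanSpace ℝ (Fin d))) := by
    intro x hx
    obtain ⟨k, s, l, hk, hkn, hext, -, hl0, hl1, hsum⟩ := hdec x hx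
    refine ⟨Finset.univ.image s, ?_, ?_, ?_⟩
    · intro a ha
      simp only [Finset.coe_image, Finset.coe_univ, Set.image_univ, Set.mem_range] at ha
      obtain ⟨j, rfl⟩ := ha
      exact hext j
    · exact le_trans (Finset.card_image_le) (by simp [hkn])
    · have hco : ↑(Finset.univ.image s) = Set.range s := by
        simp [Finset.coe_image]
      rw [hco]
      have := affineCombination_mem_affineSpan (k := ℝ) (s := Finset.univ) hl1 s
      rwa [Finset.affineCombination_eq_linear_combination _ _ _ hl1, hsum] at this
  -- the countable family of bad sets
  set T : Set (Finset (EuclideanSpace ℝ (Fin d))) :=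
    {A | ↑A ⊆ Set.extremePoints ℝ S ∧ A.card ≤ n} with hT
  have hTc : T.Countable := by
    have h1 : {s : Set (EuclideanSpace ℝ (Fin d)) |
        s.Finite ∧ s ⊆ Set.extremePoints ℝ S}.Countable :=
      Set.countable_setOf_finite_subset hC
    refine (h1.preimage Finset.coe_injective).mono ?_
    intro A hA
    exact ⟨A.finite_toSet, hA.1⟩
  set F : Finset (EuclideanSpace ℝ (Fin d)) → Set (affineSpan ℝ S) := fun A =>
    (Subtype.val : (affineSpan ℝ S) → EuclideanSpace ℝ (Fin d)) ⁻¹'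
      (affineSpan ℝ (↑A : Set (EuclideanSpace ℝ (Fin d))) : Set (EuclideanSpace ℝ (Fin d)))
    with hF
  -- each bad set is closed and nowhere dense
  have hclosed : ∀ A : Finset (EuclideanSpace ℝ (Fin d)), IsClosed (F A) := fun A =>
    (affineSpan ℝ (↑A : Set (EuclideanSpace ℝ (Fin d)))).closed_of_finiteDimensional.preimage
      continuous_subtype_val
  have hND : ∀ A ∈ T, IsNowhereDense (F A) := by
    intro A hA
    rw [(hclosed A).isNowhereDense_iff]
    set Q : AffineSubspace ℝ (EuclideanSpace ℝ (Fin d)) :=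
      affineSpan ℝ (↑A : Set (EuclideanSpace ℝ (Fin d))) with hQ
    have hQP : Q ≤ (affineSpan ℝ S) := affineSpan_mono ℝ (hA.1.trans (extremePoints_subset))
    have hrank : Module.finrank ℝ Q.direction < n := by
      rcases Nat.eq_zero_or_pos A.card with hc | hc
      · have : A = ∅ := Finset.card_eq_zero.1 hc
        subst this
        rw [hQ, Finset.coe_empty, AffineSubspace.span_empty, AffineSubspace.direction_bot,
          finrank_bot]
        omega
      · obtain ⟨m, hm⟩ : ∃ m, A.card = m + 1 := ⟨A.card - 1, by omega⟩
        have hAid : A.image id = A := Finset.image_id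
        have h2 := finrank_vectorSpan_image_finset_le ℝ (id : EuclideanSpace ℝ (Fin d) →
          EuclideanSpace ℝ (Fin d)) A hm
        rw [hAid] at h2
        rw [hQ, direction_affineSpan]
        have hmn : m + 1 ≤ n := hm ▸ hA.2
        omega
    have hne : Q.direction ≠ (affineSpan ℝ S).direction := fun h => by
      rw [h, hdim] at hrank; omega
    obtain ⟨v, hvP, hvQ⟩ := SetLike.exists_of_lt
      (lt_of_le_of_ne (AffineSubspace.direction_le hQP) hne)
    exact aux_interior_empty (affineSpan ℝ S) Q v hvP hvQ
  -- (affineSpan ℝ S) is a Baire space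
  have hPc : IsClosed ((affineSpan ℝ S) : Set (EuclideanSpace ℝ (Fin d))) := (affineSpan ℝ S).closed_of_finiteDimensional
  have : CompleteSpace (affineSpan ℝ S) := hPc.completeSpace_coe
  -- the preimage of S in (affineSpan ℝ S) is meagre
  have hMeagre : IsMeagre ((Subtype.val : (affineSpan ℝ S) → EuclideanSpace ℝ (Fin d)) ⁻¹' S) := by
    rw [isMeagre_iff_countable_union_isNowhereDense]
    refine ⟨F '' T, ?_, hTc.image F, ?_⟩
    · rintro t ⟨A, hA, rfl⟩
      exact hND A hA
    · intro y hy
      obtain ⟨A, hA1, hA2, hA3⟩ := hcover y hy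
      exact Set.mem_sUnion.2 ⟨F A, ⟨A, ⟨hA1, hA2⟩, rfl⟩, hA3⟩
  -- hence its interior is empty
  have hint : interior ((Subtype.val : (affineSpan ℝ S) → EuclideanSpace ℝ (Fin d)) ⁻¹' S) = ∅ :=
    interior_eq_empty_iff_dense_compl.2 (dense_of_mem_residual hMeagre)
  -- but the intrinsic interior is nonempty
  obtain ⟨x, hx⟩ := hSne.intrinsicInterior hSconvex
  rw [intrinsicInterior] at hx
  obtain ⟨y, hy, -⟩ := hx
  rw [hint] at hy
  exact hy
end
end

section
/- Let S be a compact finite-dimensional convex set on which the group of bijective affine transformations acts transitively on the set of extreme points. Then the set of extreme points of S is compact (hence closed in S). -/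
noncomputable section

open Set Filter Topology

/-- The group of bijective affine transformations of `S` acts transitively on the set of
extreme points of `S`. -/
def AutTransitiveOnExtreme {E : Type*} [NormedAddCommGroup E] [NormedSpace ℝ E]
    (S : Set E) : Prop :=
  ∀ x ∈ Set.extremePoints ℝ S, ∀ y ∈ Set.extremePoints ℝ S,
    ∃ f : E ≃ᵃ[ℝ] E, f '' S = S ∧ f x = y


lemma exists_lipschitz_const {d : ℕ} (S : Set (EuclideanSpace ℝ (Fin d)))
    (hS : Bornology.IsBounded S) (x₀ : EuclideanSpace ℝ (Fin d)) (hx₀ : x₀ ∈ S) :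
    ∃ C : ℝ, 0 < C ∧ ∀ f : EuclideanSpace ℝ (Fin d) ≃ᵃ[ℝ] EuclideanSpace ℝ (Fin d),
      f '' S ⊆ S → ∀ u ∈ S, ∀ v ∈ S, ‖f u - f v‖ ≤ C * ‖u - v‖ := by
  obtain ⟨R, hR⟩ := hS.subset_closedBall 0
  have hRS : ∀ s ∈ S, ‖s‖ ≤ R := fun s hs => by
    simpa [mem_closedBall_zero_iff] using hR hs
  have hR0 : 0 ≤ R := le_trans (norm_nonneg x₀) (hRS x₀ hx₀)
  set T : Set (EuclideanSpace ℝ (Fin d)) := (fun p => p - x₀) '' S with hTdef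
  obtain ⟨t, hts, hspan, hli⟩ := exists_linearIndependent ℝ T
  let b := Module.Basis.extend (show LinearIndepOn ℝ id t from hli)
  haveI : Fintype (LinearIndepOn.extend (show LinearIndepOn ℝ id t from hli) (Set.subset_univ t)) := FiniteDimensional.fintypeBasisIndex b
  set K : ℝ := ∑ i, ‖LinearMap.toContinuousLinearMap (b.coord i)‖ with hK
  have hK0 : 0 ≤ K := Finset.sum_nonneg fun i _ => norm_nonneg _
  refine ⟨2 * R * K + 1, by positivity, fun f hf u hu v hv => ?_⟩
  -- u - v lies in the span of t
  have hw : u - v ∈ Submodule.span ℝ t := by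
    have h1 : u - x₀ ∈ Submodule.span ℝ t := by
      rw [hspan]; exact Submodule.subset_span ⟨u, hu, rfl⟩
    have h2 : v - x₀ ∈ Submodule.span ℝ t := by
      rw [hspan]; exact Submodule.subset_span ⟨v, hv, rfl⟩
    simpa using Submodule.sub_mem _ h1 h2
  -- support of the coordinates is inside t
  have himg : b '' ((↑) ⁻¹' t) = t := by
    rw [Module.Basis.coe_extend]
    refine Set.image_preimage_eq_of_subset ?_
    rw [Subtype.range_coe]
    exact LinearIndepOn.subset_extend (show LinearIndepOn ℝ id t from hli) _
  have hsupp := (Module.Basis.mem_span_image b).mp (show u - v ∈ Submodule.span ℝ (b '' ((↑) ⁻¹' t)) by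
    rw [himg]; exact hw)
  -- per-coordinate bounds
  have hcoord : ∀ i, |b.repr (u - v) i| ≤ ‖LinearMap.toContinuousLinearMap (b.coord i)‖ * ‖u - v‖ := by
    intro i
    have := (LinearMap.toContinuousLinearMap (b.coord i)).le_opNorm (u - v)
    simpa [Module.Basis.coord_apply] using this
  have hvec : ∀ i, b.repr (u - v) i ≠ 0 → ‖f.linear (b i)‖ ≤ 2 * R := by
    intro i hi
    have hit : (b i : EuclideanSpace ℝ (Fin d)) ∈ t := by
      have h : i ∈ ((↑) ⁻¹' t : Set _) := hsupp (by simpa using hi)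
      have hb : b i = (i : EuclideanSpace ℝ (Fin d)) := Module.Basis.extend_apply_self (show LinearIndepOn ℝ id t from hli) i
      rw [hb]; exact h
    obtain ⟨s, hs, hsi⟩ := hts hit
    have hlin : f.linear (b i) = f s - f x₀ := by
      have := (f : EuclideanSpace ℝ (Fin d) →ᵃ[ℝ] EuclideanSpace ℝ (Fin d)).linearMap_vsub s x₀
      simp only [vsub_eq_sub] at this
      rw [← hsi]
      simpa using this
    rw [hlin]
    have h1 : ‖f s‖ ≤ R := hRS _ (hf ⟨s, hs, rfl⟩)
    have h2 : ‖f x₀‖ ≤ R := hRS _ (hf ⟨x₀, hx₀, rfl⟩)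
    calc ‖f s - f x₀‖ ≤ ‖f s‖ + ‖f x₀‖ := norm_sub_le _ _
    _ ≤ 2 * R := by linarith
  -- main computation
  have hmain : f u - f v = ∑ i, b.repr (u - v) i • f.linear (b i) := by
    have h1 : f u - f v = f.linear (u - v) := by
      have := (f : EuclideanSpace ℝ (Fin d) →ᵃ[ℝ] EuclideanSpace ℝ (Fin d)).linearMap_vsub u v
      simp only [vsub_eq_sub] at this
      simpa using this.symm
    rw [h1]
    conv_lhs => rw [← b.sum_repr (u - v)]
    rw [map_sum]
    simp [map_smul]
  rw [hmain]
  calc ‖∑ i, b.repr (u - v) i • f.linear (b i)‖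
      ≤ ∑ i, ‖b.repr (u - v) i • f.linear (b i)‖ := norm_sum_le _ _
    _ ≤ ∑ i, (‖LinearMap.toContinuousLinearMap (b.coord i)‖ * ‖u - v‖) * (2 * R) := by
        refine Finset.sum_le_sum fun i _ => ?_
        rw [norm_smul]
        by_cases hi : b.repr (u - v) i = 0
        · simp only [hi, norm_zero, zero_mul]
          have h1 : (0:ℝ) ≤ ‖LinearMap.toContinuousLinearMap (b.coord i)‖ * ‖u - v‖ :=
            mul_nonneg (norm_nonneg _) (norm_nonneg _)
          nlinarith
        · have := hvec i hi
          have h2 := hcoord i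
          have : ‖b.repr (u - v) i‖ * ‖f.linear (b i)‖ ≤ |b.repr (u - v) i| * (2 * R) := by
            rw [Real.norm_eq_abs]
            exact mul_le_mul_of_nonneg_left (hvec i hi) (abs_nonneg _)
          refine this.trans ?_
          exact mul_le_mul_of_nonneg_right h2 (by positivity)
    _ = (∑ i, ‖LinearMap.toContinuousLinearMap (b.coord i)‖) * ‖u - v‖ * (2 * R) := by
        rw [Finset.sum_mul, Finset.sum_mul]
    _ = 2 * R * K * ‖u - v‖ := by rw [← hK]; ring
    _ ≤ (2 * R * K + 1) * ‖u - v‖ := by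
        have : (0:ℝ) ≤ ‖u - v‖ := norm_nonneg _
        nlinarith


/-- Theorem: the set of extreme points of a compact finite-dimensional convex set with
vertex-transitive affine automorphism group is compact. -/
theorem extremePoints_compact {d : ℕ} (S : Set (EuclideanSpace ℝ (Fin d)))
    (hScompact : IsCompact S) (hSconvex : Convex ℝ S)
    (htrans : AutTransitiveOnExtreme S) :
    IsCompact (Set.extremePoints ℝ S) := by
  rcases Set.eq_empty_or_nonempty (Set.extremePoints ℝ S) with he | ⟨x₀, hx₀⟩
  · rw [he]; exact isCompact_empty
  obtain ⟨C, hC0, hC⟩ := exists_lipschitz_const S hScompact.isBounded x₀ hx₀.1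
  refine IsCompact.of_isClosed_subset hScompact ?_ (extremePoints_subset)
  refine isClosed_of_closure_subset fun y hy => ?_
  have hyS : y ∈ S := by
    have := closure_mono (extremePoints_subset (𝕜 := ℝ) (A := S)) hy
    rwa [hScompact.isClosed.closure_eq] at this
  obtain ⟨yn, hyn, hylim⟩ := mem_closure_iff_seq_limit.mp hy
  choose f hfS hfx using fun n => htrans x₀ hx₀ (yn n) (hyn n)
  have hfmem : ∀ n, ∀ s ∈ S, f n s ∈ S := fun n s hs => (hfS n) ▸ ⟨s, hs, rfl⟩
  have hgmem : ∀ n, ∀ s ∈ S, (f n).symm s ∈ S := by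
    intro n s hs
    rw [← hfS n] at hs
    obtain ⟨w, hw, hws⟩ := hs
    rw [← hws]; simpa using hw
  have hgx : ∀ n, (f n).symm (yn n) = x₀ := by
    intro n; rw [← hfx n]; simp
  -- Lipschitz bound for symm maps
  have hCg : ∀ n, ∀ u ∈ S, ∀ v ∈ S, ‖(f n).symm u - (f n).symm v‖ ≤ C * ‖u - v‖ := by
    intro n u hu v hv
    refine hC (f n).symm (fun w hw => ?_) u hu v hv
    obtain ⟨s, hs, rfl⟩ := hw
    exact hgmem n s hs
  -- (f n).symm y → x₀
  have hgy : Tendsto (fun n => (f n).symm y) atTop (𝓝 x₀) := by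
    rw [tendsto_iff_norm_sub_tendsto_zero]
    have hb : ∀ n, ‖(f n).symm y - x₀‖ ≤ C * ‖y - yn n‖ := by
      intro n
      rw [← hgx n]
      exact hCg n y hyS (yn n) (hyn n).1
    refine squeeze_zero (fun n => norm_nonneg _) hb ?_
    have : Tendsto (fun n => ‖y - yn n‖) atTop (𝓝 0) := by
      have := (tendsto_iff_norm_sub_tendsto_zero.mp hylim)
      simpa [norm_sub_rev] using this
    simpa using this.const_mul C
  rw [mem_extremePoints]
  refine ⟨hyS, fun a ha b hb hseg => ?_⟩
  by_cases hab : a = b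
  · subst hab
    rw [openSegment_same] at hseg
    rw [Set.mem_singleton_iff] at hseg
    exact ⟨hseg.symm, hseg.symm⟩
  exfalso
  obtain ⟨p, q, hp, hq, hpq, hy'⟩ := hseg
  obtain ⟨a', ha'S, φ, hφ, hφa⟩ := hScompact.tendsto_subseq
    (x := fun n => (f n).symm a) (fun n => hgmem n a ha)
  obtain ⟨b', hb'S, ψ, hψ, hψb⟩ := hScompact.tendsto_subseq
    (x := fun n => (f (φ n)).symm b) (fun n => hgmem (φ n) b hb)
  have h2 : Tendsto (fun n => (f (φ (ψ n))).symm a) atTop (𝓝 a') := by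
    have := hφa.comp hψ.tendsto_atTop
    simpa [Function.comp_def] using this
  have h3 : Tendsto (fun n => (f (φ (ψ n))).symm b) atTop (𝓝 b') := by
    simpa [Function.comp_def] using hψb
  have h1 : Tendsto (fun n => (f (φ (ψ n))).symm y) atTop (𝓝 x₀) := by
    have := hgy.comp (hφ.comp hψ).tendsto_atTop
    simpa [Function.comp_def] using this
  have hcombo : ∀ n, (f n).symm y = p • (f n).symm a + q • (f n).symm b := by
    intro n
    rw [← hy']
    have := Convex.combo_affine_apply (x := a) (y := b)
      (f := ((f n).symm : EuclideanSpace ℝ (Fin d) →ᵃ[ℝ] EuclideanSpace ℝ (Fin d))) hpq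
    simpa using this
  have hx₀combo : x₀ = p • a' + q • b' := by
    refine tendsto_nhds_unique h1 ?_
    have : Tendsto (fun n => p • (f (φ (ψ n))).symm a + q • (f (φ (ψ n))).symm b)
        atTop (𝓝 (p • a' + q • b')) := (h2.const_smul p).add (h3.const_smul q)
    simpa [← hcombo] using this
  obtain ⟨ha', hb'⟩ := (mem_extremePoints.mp hx₀).2 a' ha'S b' hb'S ⟨p, q, hp, hq, hpq, hx₀combo.symm⟩
  have hlow : ∀ n, ‖a - b‖ ≤ C * ‖(f n).symm a - (f n).symm b‖ := by
    intro n
    have := hC (f n) (le_of_eq (hfS n)) ((f n).symm a) (hgmem n a ha)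
      ((f n).symm b) (hgmem n b hb)
    simpa using this
  have hnorm : Tendsto (fun n => C * ‖(f (φ (ψ n))).symm a - (f (φ (ψ n))).symm b‖)
      atTop (𝓝 (C * ‖a' - b'‖)) := ((h2.sub h3).norm).const_mul C
  have hfin : ‖a - b‖ ≤ C * ‖a' - b'‖ :=
    ge_of_tendsto hnorm (Filter.Eventually.of_forall fun n => hlow _)
  rw [ha', hb'] at hfin
  simp at hfin
  exact hab (sub_eq_zero.mp hfin)
end
end

section
/- Let S be a compact finite-dimensional convex set whose affine automorphism group acts transitively on the extreme points of S. Then any fixed point s of this group action lies in the interior of S relative to its affine hull. -/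
noncomputable section

open Set

lemma exists_support {d : ℕ} (S : Set (EuclideanSpace ℝ (Fin d)))
    (hScompact : IsCompact S) (hSconvex : Convex ℝ S)
    (s : EuclideanSpace ℝ (Fin d)) (hsS : s ∈ S)
    (hc : s ∉ intrinsicInterior ℝ S) :
    ∃ g : EuclideanSpace ℝ (Fin d) → ℝ, Continuous g ∧ (∀ x ∈ S, g x ≤ 0) ∧ g s = 0 ∧
      (∃ a ∈ S, g a < 0) ∧
      (∀ (a b : ℝ) (x y : EuclideanSpace ℝ (Fin d)), a + b = 1 →
        g (a • x + b • y) = a * g x + b * g y) := by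
  set A := affineSpan ℝ S with hA
  have hsA : s ∈ A := subset_affineSpan ℝ S hsS
  haveI : Nonempty A := ⟨⟨s, hsA⟩⟩
  set V := A.direction with hV
  have hmem : ∀ x ∈ S, s - x ∈ V := fun x hx => by
    simpa [vsub_eq_sub] using
      AffineSubspace.vsub_mem_direction hsA (subset_affineSpan ℝ S hx)
  set h : EuclideanSpace ℝ (Fin d) → V := fun x => Submodule.orthogonalProjectionOnto V (s - x) with hh
  have hcont : Continuous h := (Submodule.orthogonalProjectionOnto V).continuous.comp
    (continuous_const.sub continuous_id)
  have hval : ∀ x (hx : x ∈ S), h x = ⟨s - x, hmem x hx⟩ := fun x hx => by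
    simpa [hh] using Submodule.orthogonalProjectionOnto_mem_subspace_eq_self (⟨s - x, hmem x hx⟩ : V)
  set T : Set V := h '' S with hT
  have hcombo : ∀ (a b : ℝ) (x y : EuclideanSpace ℝ (Fin d)), a + b = 1 → h (a • x + b • y) = a • h x + b • h y := by
    intro a b x y hab
    have : s - (a • x + b • y) = a • (s - x) + b • (s - y) := by
      have h1 : s = a • s + b • s := by rw [← add_smul, hab, one_smul]
      rw [smul_sub, smul_sub]
      nth_rewrite 1 [h1]
      abel
    simp only [hh, this, map_add, map_smul]
  have h0T : (0 : V) ∈ T := ⟨s, hsS, by simp [hh]⟩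
  have hTconv : Convex ℝ T := by
    rintro u ⟨x, hx, rfl⟩ v ⟨y, hy, rfl⟩ a b ha hb hab
    exact ⟨a • x + b • y, hSconvex hx hy ha hb hab, hcombo a b x y hab⟩
  have hTcomp : IsCompact T := hScompact.image hcont
  -- affine span of T is everything
  have hTspan : affineSpan ℝ T = ⊤ := by
    have hspanT : Submodule.span ℝ T = ⊤ := by
      rw [Submodule.eq_top_iff']
      intro v
      have hv : (v : EuclideanSpace ℝ (Fin d)) ∈ Submodule.map V.subtype (Submodule.span ℝ T) := by
        rw [Submodule.map_span]
        have himg : V.subtype '' T = (fun x => s - x) '' S := by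
          ext w
          constructor
          · rintro ⟨u, ⟨x, hx, rfl⟩, rfl⟩
            exact ⟨x, hx, by rw [hval x hx]; rfl⟩
          · rintro ⟨x, hx, rfl⟩
            exact ⟨h x, ⟨x, hx, rfl⟩, by rw [hval x hx]; rfl⟩
        rw [himg]
        have hvV : (v : EuclideanSpace ℝ (Fin d)) ∈ vectorSpan ℝ S := by
          rw [← direction_affineSpan]; exact v.2
        have hle2 : vectorSpan ℝ S ≤ Submodule.span ℝ ((fun x => s - x) '' S) := by
          rw [vectorSpan_def]
          refine Submodule.span_le.2 ?_
          rintro w ⟨x, hx, y, hy, rfl⟩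
          show x -ᵥ y ∈ _
          have hxy : x -ᵥ y = (s - y) - (s - x) := by
            simp only [vsub_eq_sub]; abel
          rw [hxy]
          exact sub_mem (Submodule.subset_span ⟨y, hy, rfl⟩)
            (Submodule.subset_span ⟨x, hx, rfl⟩)
        exact hle2 hvV
      obtain ⟨w, hw, hwv⟩ := hv
      have : w = v := Subtype.ext hwv
      rwa [← this]
    have hdir : vectorSpan ℝ T = ⊤ := by
      rw [eq_top_iff, ← hspanT]
      refine Submodule.span_le.2 fun t ht => ?_
      have : t = t -ᵥ (0 : V) := by simp
      rw [this]
      exact vsub_mem_vectorSpan ℝ ht h0T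
    have h1 : (affineSpan ℝ T).direction = ⊤ := by rw [direction_affineSpan, hdir]
    exact (AffineSubspace.direction_eq_top_iff_of_nonempty
      ((affineSpan ℝ T).nonempty_iff_ne_bot.2 (by
        simp only [ne_eq, affineSpan_eq_bot]
        exact fun hbot => (Set.nonempty_iff_ne_empty.1 ⟨0, h0T⟩) hbot))).1 h1
  have hint : (interior T).Nonempty := by
    rw [hTconv.interior_nonempty_iff_affineSpan_eq_top]
    exact hTspan
  -- 0 is not in the interior of T
  have h0not : (0 : V) ∉ interior T := by
    intro h0
    apply hc
    rw [mem_intrinsicInterior]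
    refine ⟨⟨s, hsA⟩, ?_, rfl⟩
    set χ : A → V := fun a =>
      ⟨s - (a : EuclideanSpace ℝ (Fin d)), by simpa [vsub_eq_sub] using AffineSubspace.vsub_mem_direction hsA a.2⟩
      with hχ
    have hχcont : Continuous χ :=
      Continuous.subtype_mk (continuous_const.sub continuous_subtype_val) _
    have hχT : χ ⁻¹' T = ((↑) ⁻¹' S : Set A) := by
      ext a
      simp only [mem_preimage, hT]
      constructor
      · rintro ⟨x, hx, hxa⟩
        rw [hval x hx] at hxa
        have : s - x = s - (a : EuclideanSpace ℝ (Fin d)) := congrArg Subtype.val hxa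
        have : x = (a : EuclideanSpace ℝ (Fin d)) := by
          rw [← sub_sub_cancel s x, this, sub_sub_cancel]
        rwa [← this]
      · intro ha
        exact ⟨(a : EuclideanSpace ℝ (Fin d)), ha, by rw [hval _ ha]⟩
    have hχ0 : χ ⟨s, hsA⟩ = 0 := Subtype.ext (sub_self s)
    have : (⟨s, hsA⟩ : A) ∈ χ ⁻¹' (interior T) := by
      rw [mem_preimage, hχ0]; exact h0
    have hsub := preimage_interior_subset_interior_preimage (t := T) hχcont
    rw [hχT] at hsub
    exact hsub this
  obtain ⟨ℓ, hℓ⟩ := geometric_hahn_banach_open_point (hTconv.interior) isOpen_interior h0not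
  simp only [map_zero] at hℓ
  obtain ⟨b, hb⟩ := hint
  -- every point of T has ℓ ≤ 0
  have hle : ∀ v ∈ T, ℓ v ≤ 0 := by
    intro v hv
    have key : ∀ t ∈ Ioo (0 : ℝ) 1, ℓ (t • b + (1 - t) • v) < 0 := fun t ht =>
      hℓ _ (hTconv.combo_interior_closure_mem_interior hb (subset_closure hv) ht.1
        (by linarith [ht.2]) (by ring))
    have hlim : Filter.Tendsto (fun t : ℝ => ℓ (t • b + (1 - t) • v))
        (nhdsWithin 0 (Ioi 0)) (nhds (ℓ v)) := by
      have hc2 : Continuous fun t : ℝ => ℓ (t • b + (1 - t) • v) :=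
        ℓ.continuous.comp ((continuous_id.smul continuous_const).add
          ((continuous_const.sub continuous_id).smul continuous_const))
      have := hc2.tendsto 0
      simp only [zero_smul, sub_zero, one_smul, zero_add] at this
      exact this.mono_left nhdsWithin_le_nhds
    refine le_of_tendsto hlim ?_
    filter_upwards [Ioo_mem_nhdsGT_of_mem (Set.mem_Ico.2 ⟨le_refl (0:ℝ), zero_lt_one⟩)]
      with t ht using (key t ht).le
  refine ⟨fun x => ℓ (h x), ℓ.continuous.comp hcont, ?_, ?_, ?_, ?_⟩
  · exact fun x hx => hle (h x) ⟨x, hx, rfl⟩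
  · simp [hh]
  · obtain ⟨x, hx, hxb⟩ : b ∈ T := interior_subset hb
    refine ⟨x, hx, ?_⟩
    show ℓ (h x) < 0
    rw [hxb]; exact hℓ b hb
  · intro a b' x y hab
    show ℓ (h (a • x + b' • y)) = a * ℓ (h x) + b' * ℓ (h y)
    rw [hcombo a b' x y hab, map_add, map_smul, map_smul]
    rfl

/-- Theorem: a fixed point of the affine automorphism group of a compact finite-dimensional
convex set with transitive action on extreme points lies in the interior of `S` relative to its
affine hull (the intrinsic interior). -/
theorem fixed_point_mem_intrinsicInterior {d : ℕ} (S : Set (EuclideanSpace ℝ (Fin d)))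
    (hScompact : IsCompact S) (hSconvex : Convex ℝ S)
    (htrans : AutTransitiveOnExtreme S)
    (s : EuclideanSpace ℝ (Fin d)) (hsS : s ∈ S)
    (hfix : ∀ f : EuclideanSpace ℝ (Fin d) ≃ᵃ[ℝ] EuclideanSpace ℝ (Fin d),
      f '' S = S → f s = s) :
    s ∈ intrinsicInterior ℝ S := by
  by_contra hc
  obtain ⟨g, hgcont, hgle, hgs, ⟨a₀, ha₀S, ha₀⟩, hgaff⟩ :=
    exists_support S hScompact hSconvex s hsS hc
  -- the family of closed convex faces of S containing s
  set 𝓕 : Set (Set (EuclideanSpace ℝ (Fin d))) :=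
    {F | IsClosed F ∧ Convex ℝ F ∧ IsExtreme ℝ S F ∧ s ∈ F} with h𝓕
  have hS𝓕 : S ∈ 𝓕 := ⟨hScompact.isClosed, hSconvex, IsExtreme.rfl, hsS⟩
  set F₀ : Set (EuclideanSpace ℝ (Fin d)) := ⋂₀ 𝓕 with hF₀
  have hF₀sub : F₀ ⊆ S := Set.sInter_subset_of_mem hS𝓕
  have hF₀closed : IsClosed F₀ := isClosed_sInter fun F hF => hF.1
  have hF₀ext : IsExtreme ℝ S F₀ := isExtreme_sInter ⟨S, hS𝓕⟩ fun F hF => hF.2.2.1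
  have hF₀comp : IsCompact F₀ := hScompact.of_isClosed_subset hF₀closed hF₀sub
  have hsF₀ : s ∈ F₀ := Set.mem_sInter.2 fun F hF => hF.2.2.2
  -- extreme point of the minimal face
  obtain ⟨e, he⟩ := hF₀comp.extremePoints_nonempty ⟨s, hsF₀⟩
  have heS : e ∈ S.extremePoints ℝ := hF₀ext.extremePoints_subset_extremePoints he
  have heF₀ : e ∈ F₀ := he.1
  -- the minimal face is invariant under automorphisms fixing s
  have hinv : ∀ (f : EuclideanSpace ℝ (Fin d) ≃ᵃ[ℝ] EuclideanSpace ℝ (Fin d)),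
      f '' S = S → f s = s → ∀ F ∈ 𝓕, f ⁻¹' F ∈ 𝓕 := by
    intro f hfS hfs F hF
    have hfpreS : f ⁻¹' S = S := by
      conv_lhs => rw [← hfS]
      exact Set.preimage_image_eq _ f.injective
    have hfc : Continuous f := f.continuous_of_finiteDimensional
    refine ⟨hF.1.preimage hfc, hF.2.1.affine_preimage f.toAffineMap, ?_, ?_⟩
    · constructor
      · intro x hx
        have : f x ∈ S := hF.2.2.1.1 hx
        rwa [← hfpreS]
      · intro x hx y hy z hz hzseg
        have hfz : f z ∈ openSegment ℝ (f x) (f y) := by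
          have himg := image_openSegment ℝ f.toAffineMap x y
          have hmem : f z ∈ ⇑f.toAffineMap '' openSegment ℝ x y :=
            Set.mem_image_of_mem _ hzseg
          rw [himg] at hmem
          exact hmem
        have hxS : f x ∈ S := by rw [← hfS]; exact Set.mem_image_of_mem _ hx
        have hyS : f y ∈ S := by rw [← hfS]; exact Set.mem_image_of_mem _ hy
        exact hF.2.2.1.2 hxS hyS hz hfz
    · show f s ∈ F
      rw [hfs]; exact hF.2.2.2
  -- every extreme point of S lies in F₀
  have hext : S.extremePoints ℝ ⊆ F₀ := by
    intro y hy
    obtain ⟨f, hfS, hfe⟩ := htrans e heS y hy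
    have hfs : f s = s := hfix f hfS
    refine Set.mem_sInter.2 fun F hF => ?_
    have : e ∈ f ⁻¹' F := Set.sInter_subset_of_mem (hinv f hfS hfs F hF) heF₀
    rwa [← hfe]
  -- the set where g vanishes is a face containing s, so F₀ is inside it
  have hFg : {x ∈ S | g x = 0} ∈ 𝓕 := by
    refine ⟨?_, ?_, ?_, hsS, hgs⟩
    · exact hScompact.isClosed.inter (isClosed_eq hgcont continuous_const)
    · intro x hx y hy α β hα hβ hαβ
      refine ⟨hSconvex hx.1 hy.1 hα hβ hαβ, ?_⟩
      rw [hgaff α β x y hαβ, hx.2, hy.2]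
      ring
    · constructor
      · exact fun x hx => hx.1
      · rintro x hx y hy z hz ⟨α, β, hα, hβ, hαβ, rfl⟩
        have h0 : α * g x + β * g y = 0 := by rw [← hgaff α β x y hαβ]; exact hz.2
        have h1 : g x ≤ 0 := hgle x hx
        have h2 : g y ≤ 0 := hgle y hy
        exact ⟨hx, by nlinarith⟩
  -- conclude: S is contained in the zero set of g, contradiction with a₀
  have hSsub : S ⊆ {x ∈ S | g x = 0} := by
    have hKM := closure_convexHull_extremePoints hScompact hSconvex
    have hsub1 : convexHull ℝ (S.extremePoints ℝ) ⊆ {x ∈ S | g x = 0} :=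
      convexHull_min (fun y hy => Set.sInter_subset_of_mem hFg (hext hy)) hFg.2.1
    have hsub2 : closure (convexHull ℝ (S.extremePoints ℝ)) ⊆ {x ∈ S | g x = 0} :=
      closure_minimal hsub1 hFg.1
    rwa [hKM] at hsub2
  exact absurd (hSsub ha₀S).2 (ne_of_lt ha₀)
end
end

section
/- Let S be a compact convex subset of ℝⁿ with affine hull equal to ℝⁿ, whose group of bijective affine transformations acts transitively on extreme points. Then the action of Aut(S) on S has a unique fixed point. -/
noncomputable section

open MeasureTheory Set Filter Topology

lemma aut_preimage {E : Type*} [NormedAddCommGroup E] [NormedSpace ℝ E]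
    {S : Set E} (f : E ≃ᵃ[ℝ] E) (hf : f '' S = S) : f ⁻¹' S = S := by
  conv_lhs => rw [← hf]
  exact Set.preimage_image_eq S f.injective

variable {n : ℕ}

lemma exists_fixed (S : Set (EuclideanSpace ℝ (Fin n))) (hScompact : IsCompact S)
    (hSconvex : Convex ℝ S) (hint : (interior S).Nonempty) :
    ∃ c ∈ S, ∀ f : EuclideanSpace ℝ (Fin n) ≃ᵃ[ℝ] EuclideanSpace ℝ (Fin n),
      f '' S = S → f c = c := by
  have hS_meas : MeasurableSet S := hScompact.isClosed.measurableSet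
  have hpos : 0 < volume S :=
    lt_of_lt_of_le (isOpen_interior.measure_pos volume hint) (measure_mono interior_subset)
  have hfin : volume S ≠ ⊤ := hScompact.measure_lt_top.ne
  set μ0 : Measure (EuclideanSpace ℝ (Fin n)) := (volume S)⁻¹ • volume.restrict S with hμ0
  have hprob : IsProbabilityMeasure μ0 := by
    constructor
    simp [hμ0, Measure.smul_apply, Measure.restrict_apply_univ,
      ENNReal.inv_mul_cancel hpos.ne' hfin]
  have hae : ∀ᵐ x ∂μ0, x ∈ S := Measure.ae_smul_measure (ae_restrict_mem hS_meas) _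
  have hint_id : Integrable (fun x => x) μ0 := by
    refine Integrable.smul_measure ?_ (by simp [hpos.ne'])
    exact continuous_id.continuousOn.integrableOn_compact hScompact
  set c := ∫ x, x ∂μ0 with hc
  refine ⟨c, hSconvex.integral_mem hScompact.isClosed hae hint_id, ?_⟩
  intro f hf
  have hfc : Continuous f := f.continuous_of_finiteDimensional
  have hfm : Measurable f := hfc.measurable
  set L : EuclideanSpace ℝ (Fin n) →ₗ[ℝ] EuclideanSpace ℝ (Fin n) :=
    (f.linear : EuclideanSpace ℝ (Fin n) →ₗ[ℝ] EuclideanSpace ℝ (Fin n)) with hL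
  have hdet : LinearMap.det L ≠ 0 := by
    have := f.linear.isUnit_det'
    simpa [hL, isUnit_iff_ne_zero] using this
  have hcoe' : ∀ x, f x = L x + f 0 := by
    intro x
    have h := congrFun (AffineMap.decomp (f : EuclideanSpace ℝ (Fin n) →ᵃ[ℝ] EuclideanSpace ℝ (Fin n))) x
    simpa [hL] using h
  have hcoe : ⇑f = (fun y => y + f 0) ∘ ⇑L := funext fun x => hcoe' x
  have hmapL : Measure.map (⇑L) volume = ENNReal.ofReal |(LinearMap.det L)⁻¹| • volume :=
    Measure.map_linearMap_addHaar_eq_smul_addHaar volume hdet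
  have hmapf : Measure.map (⇑f) volume = ENNReal.ofReal |(LinearMap.det L)⁻¹| • volume := by
    have h1 : Measurable (fun y : EuclideanSpace ℝ (Fin n) => y + f 0) :=
      measurable_add_const (f 0)
    rw [hcoe, ← Measure.map_map h1 L.continuous_of_finiteDimensional.measurable, hmapL,
      Measure.map_smul, map_add_right_eq_self volume (f 0)]
  have hone : ENNReal.ofReal |(LinearMap.det L)⁻¹| = 1 := by
    have hSmap : Measure.map (⇑f) volume S = volume S := by
      rw [Measure.map_apply hfm hS_meas, aut_preimage f hf]
    rw [hmapf] at hSmap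
    simp only [Measure.smul_apply, smul_eq_mul] at hSmap
    calc ENNReal.ofReal |(LinearMap.det L)⁻¹|
        = ENNReal.ofReal |(LinearMap.det L)⁻¹| * (volume S * (volume S)⁻¹) := by
          rw [ENNReal.mul_inv_cancel hpos.ne' hfin, mul_one]
      _ = (ENNReal.ofReal |(LinearMap.det L)⁻¹| * volume S) * (volume S)⁻¹ := by ring
      _ = volume S * (volume S)⁻¹ := by rw [hSmap]
      _ = 1 := ENNReal.mul_inv_cancel hpos.ne' hfin
  have hmapf' : Measure.map (⇑f) volume = volume := by rw [hmapf, hone, one_smul]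
  have hmaprestrict : Measure.map (⇑f) (volume.restrict S) = volume.restrict S := by
    calc Measure.map (⇑f) (volume.restrict S)
        = Measure.map (⇑f) (volume.restrict (⇑f ⁻¹' S)) := by rw [aut_preimage f hf]
      _ = (Measure.map (⇑f) volume).restrict S := (Measure.restrict_map hfm hS_meas).symm
      _ = volume.restrict S := by rw [hmapf']
  have hmap0 : Measure.map (⇑f) μ0 = μ0 := by
    rw [hμ0, Measure.map_smul, hmaprestrict]
  have key : ∫ x, f x ∂μ0 = c := by
    have h := integral_map (φ := ⇑f) (μ := μ0) (f := fun y : EuclideanSpace ℝ (Fin n) => y)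
      hfm.aemeasurable aestronglyMeasurable_id
    rw [hmap0] at h
    rw [hc]
    exact h.symm
  have hLint : Integrable (fun x => L x) μ0 :=
    (LinearMap.toContinuousLinearMap L).integrable_comp hint_id
  calc f c = L c + f 0 := hcoe' c
    _ = L (∫ x, x ∂μ0) + f 0 := by rw [hc]
    _ = (∫ x, L x ∂μ0) + f 0 := by
        have hcomm := (LinearMap.toContinuousLinearMap L).integral_comp_comm hint_id
        rw [LinearMap.coe_toContinuousLinearMap'] at hcomm
        rw [← hcomm]
    _ = ∫ x, (L x + f 0) ∂μ0 := by
        rw [integral_add hLint (integrable_const _), integral_const]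
        simp
    _ = ∫ x, f x ∂μ0 := by simp_rw [← hcoe']
    _ = c := key

variable {E' : Type*} [NormedAddCommGroup E'] [NormedSpace ℝ E']

lemma isExtreme_affine_image {S A : Set E'} (f : E' ≃ᵃ[ℝ] E') (h : IsExtreme ℝ S A) :
    IsExtreme ℝ (f '' S) (f '' A) := by
  refine ⟨Set.image_mono h.1, ?_⟩
  rintro _ ⟨y₁, hy₁, rfl⟩ _ ⟨y₂, hy₂, rfl⟩ _ ⟨y, hy, rfl⟩ hseg
  have himg := image_openSegment ℝ f.toAffineMap y₁ y₂
  simp only [AffineEquiv.coe_toAffineMap] at himg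
  rw [← himg] at hseg
  obtain ⟨w, hw, hwf⟩ := hseg
  have hwy : w = y := f.injective hwf
  subst hwy
  exact Set.mem_image_of_mem _ (h.2 hy₁ hy₂ hy hw)

variable {n : ℕ}

lemma fixed_unique (S : Set (EuclideanSpace ℝ (Fin n))) (hScompact : IsCompact S)
    (hSconvex : Convex ℝ S) (hint : (interior S).Nonempty)
    (htrans : AutTransitiveOnExtreme S)
    {c p : EuclideanSpace ℝ (Fin n)} (hcS : c ∈ S)
    (hc : ∀ f : EuclideanSpace ℝ (Fin n) ≃ᵃ[ℝ] EuclideanSpace ℝ (Fin n), f '' S = S → f c = c)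
    (hpS : p ∈ S)
    (hp : ∀ f : EuclideanSpace ℝ (Fin n) ≃ᵃ[ℝ] EuclideanSpace ℝ (Fin n), f '' S = S → f p = p) :
    p = c := by
  by_contra hne
  -- every point of the line through `c` and `p` is fixed by every automorphism
  have hline : ∀ (f : EuclideanSpace ℝ (Fin n) ≃ᵃ[ℝ] EuclideanSpace ℝ (Fin n)), f '' S = S → ∀ t : ℝ,
      f (AffineMap.lineMap c p t) = AffineMap.lineMap c p t := by
    intro f hf t
    have h := (f : EuclideanSpace ℝ (Fin n) →ᵃ[ℝ] EuclideanSpace ℝ (Fin n)).apply_lineMap c p t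
    simp only [AffineEquiv.coe_coe] at h
    rw [h, hc f hf, hp f hf]
  have hlinecont : Continuous (fun t : ℝ => AffineMap.lineMap c p t) :=
    (AffineMap.lineMap c p : ℝ →ᵃ[ℝ] EuclideanSpace ℝ (Fin n)).continuous_of_finiteDimensional
  set T := {t : ℝ | AffineMap.lineMap c p t ∈ S} with hT
  have hT0 : (0 : ℝ) ∈ T := by simpa [hT] using hcS
  have hTclosed : IsClosed T := hScompact.isClosed.preimage hlinecont
  have hpc : (0 : ℝ) < ‖p - c‖ := by
    rw [norm_pos_iff, sub_ne_zero]
    exact hne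
  have hTbdd : BddAbove T := by
    obtain ⟨R, hR⟩ := hScompact.isBounded.subset_closedBall 0
    refine ⟨(R + ‖c‖) / ‖p - c‖, fun t ht => ?_⟩
    have hz : AffineMap.lineMap c p t ∈ Metric.closedBall (0 : EuclideanSpace ℝ (Fin n)) R := hR ht
    rw [Metric.mem_closedBall, dist_zero_right] at hz
    have h1 : AffineMap.lineMap c p t = t • (p - c) + c := by
      simp [AffineMap.lineMap_apply]
    have h2 : ‖t • (p - c)‖ ≤ R + ‖c‖ := by
      have : t • (p - c) = AffineMap.lineMap c p t - c := by rw [h1]; abel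
      rw [this]
      calc ‖AffineMap.lineMap c p t - c‖ ≤ ‖AffineMap.lineMap c p t‖ + ‖c‖ := norm_sub_le _ _
        _ ≤ R + ‖c‖ := by linarith
    rw [norm_smul, Real.norm_eq_abs] at h2
    have := le_abs_self t
    rw [le_div_iff₀ hpc]
    nlinarith
  set t₀ := sSup T with ht₀
  have ht₀T : t₀ ∈ T := hTclosed.csSup_mem ⟨0, hT0⟩ hTbdd
  set z := AffineMap.lineMap c p t₀ with hzdef
  have hzS : z ∈ S := ht₀T
  have hzfix : ∀ (f : EuclideanSpace ℝ (Fin n) ≃ᵃ[ℝ] EuclideanSpace ℝ (Fin n)), f '' S = S → f z = z := fun f hf => hline f hf t₀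
  have hzni : z ∉ interior S := by
    intro hzint
    have hopen : IsOpen {t : ℝ | AffineMap.lineMap c p t ∈ interior S} :=
      isOpen_interior.preimage hlinecont
    obtain ⟨ε, hε, hball⟩ := Metric.isOpen_iff.1 hopen t₀ hzint
    have hmem : t₀ + ε / 2 ∈ T := by
      have : t₀ + ε / 2 ∈ Metric.ball t₀ ε := by
        rw [Metric.mem_ball, Real.dist_eq, add_sub_cancel_left, abs_of_pos (by linarith)]
        linarith
      have hmemT : AffineMap.lineMap c p (t₀ + ε / 2) ∈ S := interior_subset (hball this)
      exact hmemT
    have := le_csSup hTbdd hmem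
    linarith
  obtain ⟨x₀, hx₀⟩ := hint
  obtain ⟨ℓ, hℓ⟩ := geometric_hahn_banach_open_point hSconvex.interior isOpen_interior hzni
  have hle : ∀ x ∈ S, ℓ x ≤ ℓ z := by
    intro x hx
    have hcont : Continuous fun t : ℝ => ℓ (x + t • (x₀ - x)) := by fun_prop
    have htend : Tendsto (fun t : ℝ => ℓ (x + t • (x₀ - x))) (𝓝[>] (0:ℝ)) (𝓝 (ℓ x)) := by
      have h := (hcont.tendsto 0).mono_left (nhdsWithin_le_nhds (s := Ioi (0:ℝ)))
      simpa using h
    refine le_of_tendsto htend ?_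
    filter_upwards [Ioc_mem_nhdsGT_of_mem (show (0:ℝ) ∈ Ico (0:ℝ) 1 by constructor <;> norm_num)]
      with t ht
    exact (hℓ _ (hSconvex.add_smul_sub_mem_interior hx hx₀ ht)).le
  set Fl := {x ∈ S | ∀ y ∈ S, ℓ y ≤ ℓ x} with hFl
  have hz_in : z ∈ Fl := ⟨hzS, fun y hy => hle y hy⟩
  have hexp : IsExposed ℝ S Fl := fun _ => ⟨ℓ, rfl⟩
  have hFlext : IsExtreme ℝ S Fl := hexp.isExtreme
  have hFlclosed : IsClosed Fl := hexp.isClosed hScompact.isClosed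
  have hFlconvex : Convex ℝ Fl := hexp.convex hSconvex
  have hFlcompact : IsCompact Fl := hScompact.of_isClosed_subset hFlclosed hFlext.1
  set F := ⋂ g : {f : EuclideanSpace ℝ (Fin n) ≃ᵃ[ℝ] EuclideanSpace ℝ (Fin n) // f '' S = S}, (g : EuclideanSpace ℝ (Fin n) ≃ᵃ[ℝ] EuclideanSpace ℝ (Fin n)) '' Fl with hF
  haveI hGne : Nonempty {f : EuclideanSpace ℝ (Fin n) ≃ᵃ[ℝ] EuclideanSpace ℝ (Fin n) // f '' S = S} := ⟨⟨AffineEquiv.refl ℝ (EuclideanSpace ℝ (Fin n)), by simp⟩⟩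
  have hFext : IsExtreme ℝ S F := by
    refine isExtreme_iInter fun g => ?_
    have h := isExtreme_affine_image (g : EuclideanSpace ℝ (Fin n) ≃ᵃ[ℝ] EuclideanSpace ℝ (Fin n)) hFlext
    rwa [g.2] at h
  have hzF : z ∈ F := mem_iInter.2 fun g => ⟨z, hz_in, hzfix g.1 g.2⟩
  have hFclosed : IsClosed F := isClosed_iInter fun g =>
    (hFlcompact.image (g.1.continuous_of_finiteDimensional)).isClosed
  have hFconvex : Convex ℝ F := by
    refine convex_iInter fun g => ?_
    have h := hFlconvex.affine_image
      ((g : EuclideanSpace ℝ (Fin n) ≃ᵃ[ℝ] EuclideanSpace ℝ (Fin n)) :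
        EuclideanSpace ℝ (Fin n) →ᵃ[ℝ] EuclideanSpace ℝ (Fin n))
    simpa using h
  have hFcompact : IsCompact F := hScompact.of_isClosed_subset hFclosed hFext.1
  obtain ⟨e₀, he₀⟩ := hFcompact.extremePoints_nonempty ⟨z, hzF⟩
  have he₀F : e₀ ∈ F := extremePoints_subset he₀
  have he₀S : e₀ ∈ S.extremePoints ℝ := hFext.extremePoints_subset_extremePoints he₀
  have hExtF : S.extremePoints ℝ ⊆ F := by
    intro e he
    obtain ⟨g, hgS, hge⟩ := htrans e₀ he₀S e he
    refine mem_iInter.2 fun h => ?_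
    have hgsymm : g.symm '' S = S := by
      conv_lhs => rw [← hgS]
      rw [← Set.image_comp]
      simp
    have hm : (h.1.trans g.symm) '' S = S := by
      rw [AffineEquiv.coe_trans, Set.image_comp, h.2, hgsymm]
    have he₀m : e₀ ∈ ⇑(h.1.trans g.symm) '' Fl := mem_iInter.1 he₀F ⟨h.1.trans g.symm, hm⟩
    obtain ⟨w, hw, hwe⟩ := he₀m
    refine ⟨w, hw, ?_⟩
    have hws : g.symm (h.1 w) = e₀ := hwe
    calc h.1 w = g (g.symm (h.1 w)) := (g.apply_symm_apply _).symm
      _ = g e₀ := by rw [hws]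
      _ = e := hge
  have hSF : S ⊆ F := by
    have hKM := closure_convexHull_extremePoints hScompact hSconvex
    conv_lhs => rw [← hKM]
    exact closure_minimal (convexHull_min hExtF hFconvex) hFclosed
  have hFFl : F ⊆ Fl := by
    intro x hx
    have h := mem_iInter.1 hx ⟨AffineEquiv.refl ℝ (EuclideanSpace ℝ (Fin n)), by simp⟩
    simpa using h
  have hzx₀ : ℓ z ≤ ℓ x₀ := (hFFl (hSF (interior_subset hx₀))).2 z hzS
  exact absurd hzx₀ (not_le.2 (hℓ x₀ hx₀))


/-- Theorem: the affine automorphism group of a compact convex subset of `ℝⁿ` with full affine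
hull and transitive action on extreme points has a unique fixed point in `S`. -/
theorem unique_fixed_point {n : ℕ} (S : Set (EuclideanSpace ℝ (Fin n)))
    (hScompact : IsCompact S) (hSconvex : Convex ℝ S)
    (hspan : affineSpan ℝ S = ⊤)
    (htrans : AutTransitiveOnExtreme S) :
    ∃! s : EuclideanSpace ℝ (Fin n), s ∈ S ∧
      ∀ f : EuclideanSpace ℝ (Fin n) ≃ᵃ[ℝ] EuclideanSpace ℝ (Fin n), f '' S = S → f s = s := by
  have hint : (interior S).Nonempty := hSconvex.interior_nonempty_iff_affineSpan_eq_top.2 hspan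
  obtain ⟨c, hcS, hc⟩ := exists_fixed S hScompact hSconvex hint
  refine ⟨c, ⟨hcS, hc⟩, ?_⟩
  rintro p ⟨hpS, hp⟩
  exact fixed_unique S hScompact hSconvex hint htrans hcS hc hpS hp
end
end

section
/- Two points s₁, s₂ of the closed unit ball in ℝⁿ are distinguishable extreme points if and only if they are antipodal points of the unit sphere (s₂ = −s₁ with ‖s₁‖ = 1). -/
noncomputable section

open Metric RealInnerProductSpace in
private lemma aux_forward {n : ℕ} (s₁ s₂ : EuclideanSpace ℝ (Fin n))
    (h₁ : ‖s₁‖ ≤ 1) (h₂ : ‖s₂‖ ≤ 1)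
    (e : Fin 2 → (EuclideanSpace ℝ (Fin n) →ᵃ[ℝ] ℝ))
    (hnn : ∀ i, ∀ x ∈ closedBall (0:EuclideanSpace ℝ (Fin n)) 1, 0 ≤ e i x)
    (hsum : ∀ x ∈ closedBall (0:EuclideanSpace ℝ (Fin n)) 1, ∑ i, e i x = 1)
    (hone : ∀ i, e i (![s₁,s₂] i) = 1) :
    ‖s₁‖ = 1 ∧ s₂ = -s₁ := by
  set L := (e 0).linear with hL
  have hdec : ∀ x, L x = e 0 x - e 0 0 := by
    intro x
    have := (e 0).linearMap_vsub x 0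
    simpa using this
  have hb01 : ∀ x ∈ closedBall (0:EuclideanSpace ℝ (Fin n)) 1, e 0 x ≤ 1 := by
    intro x hx
    have := hsum x hx
    rw [Fin.sum_univ_two] at this
    have := hnn 1 x hx
    linarith
  have hbound : ∀ x : EuclideanSpace ℝ (Fin n), ‖x‖ ≤ 1 → |L x| ≤ 1/2 := by
    intro x hx
    have hx' : x ∈ closedBall (0:EuclideanSpace ℝ (Fin n)) 1 := by simpa using hx
    have hx'' : -x ∈ closedBall (0:EuclideanSpace ℝ (Fin n)) 1 := by simpa using hx
    have h1 := hnn 0 x hx'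
    have h2 := hnn 0 (-x) hx''
    have h3 := hb01 x hx'
    have h4 := hb01 (-x) hx''
    have hneg : L (-x) = - L x := by rw [map_neg]
    rw [hdec, hdec x] at hneg
    rw [hdec x]
    rw [abs_le]
    constructor <;> linarith
  have hbound' : ∀ x : EuclideanSpace ℝ (Fin n), |L x| ≤ ‖x‖/2 := by
    intro x
    rcases eq_or_ne x 0 with rfl | hx0
    · simp
    · have hnx : (0:ℝ) < ‖x‖ := norm_pos_iff.mpr hx0
      have hu : ‖(‖x‖⁻¹ • x : EuclideanSpace ℝ (Fin n))‖ ≤ 1 := by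
        rw [norm_smul, norm_inv, norm_norm, inv_mul_cancel₀ hnx.ne']
      have := hbound _ hu
      rw [map_smul, smul_eq_mul, abs_mul, abs_inv, abs_norm] at this
      calc |L x| = ‖x‖ * (‖x‖⁻¹ * |L x|) := by field_simp
        _ ≤ ‖x‖ * (1/2) := by
            apply mul_le_mul_of_nonneg_left this hnx.le
        _ = ‖x‖/2 := by ring
  have hs1 : e 0 s₁ = 1 := by simpa using hone 0
  have hs2' : e 1 s₂ = 1 := by simpa using hone 1
  have hs2 : e 0 s₂ = 0 := by
    have := hsum s₂ (by simpa using h₂)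
    rw [Fin.sum_univ_two] at this; linarith
  have hLd : L s₁ - L s₂ = 1 := by rw [hdec, hdec, hs1, hs2]; ring
  have hLm : L ((1/2:ℝ) • (s₁ - s₂)) = 1/2 := by
    rw [map_smul, map_sub, smul_eq_mul]; rw [hLd]; norm_num
  have hmn : ‖s₁ - s₂‖ = 2 := by
    have h5 := hbound' ((1/2:ℝ) • (s₁ - s₂))
    rw [hLm, norm_smul, Real.norm_eq_abs] at h5
    rw [show |(1/2:ℝ)| = 1/2 by norm_num] at h5
    have h6 : ‖s₁ - s₂‖ ≤ ‖s₁‖ + ‖s₂‖ := norm_sub_le _ _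
    linarith
  have hn1 : ‖s₁‖ = 1 ∧ ‖s₂‖ = 1 := by
    have := norm_sub_le s₁ s₂
    constructor <;> linarith
  refine ⟨hn1.1, ?_⟩
  have hpar := parallelogram_law_with_norm ℝ s₁ s₂
  have hz : ‖s₁ + s₂‖ = 0 := by nlinarith [hn1.1, hn1.2, norm_nonneg (s₁ + s₂)]
  have hz0 : s₁ + s₂ = 0 := norm_eq_zero.mp hz
  exact eq_neg_of_add_eq_zero_right hz0

open Metric in
private lemma aux_extreme {n : ℕ} (x : EuclideanSpace ℝ (Fin n)) (hx : ‖x‖ = 1) :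
    x ∈ Set.extremePoints ℝ (closedBall (0 : EuclideanSpace ℝ (Fin n)) 1) := by
  refine ⟨by simp [hx], fun y hy z hz hseg => ?_⟩
  rcases eq_or_ne y z with rfl | hne
  · rw [openSegment_same] at hseg
    exact hseg.symm
  · have := openSegment_subset_ball_of_ne hy hz hne hseg
    rw [mem_ball_zero_iff, hx] at this
    exact absurd this (lt_irrefl _)

open Metric RealInnerProductSpace in
/-- Theorem: two points of the closed unit ball in `ℝⁿ` form a distinguishable pair of extreme
points iff they are antipodal points of the unit sphere. -/
theorem distinguishable_pair_ball_iff_antipodal {n : ℕ}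
    (s₁ s₂ : EuclideanSpace ℝ (Fin n))
    (h₁ : s₁ ∈ Metric.closedBall (0 : EuclideanSpace ℝ (Fin n)) 1)
    (h₂ : s₂ ∈ Metric.closedBall (0 : EuclideanSpace ℝ (Fin n)) 1) :
    (s₁ ∈ Set.extremePoints ℝ (Metric.closedBall (0 : EuclideanSpace ℝ (Fin n)) 1) ∧
     s₂ ∈ Set.extremePoints ℝ (Metric.closedBall (0 : EuclideanSpace ℝ (Fin n)) 1) ∧
     Distinguishable (Metric.closedBall (0 : EuclideanSpace ℝ (Fin n)) 1) ![s₁, s₂]) ↔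
      (‖s₁‖ = 1 ∧ s₂ = -s₁) := by
  rw [mem_closedBall_zero_iff] at h₁ h₂
  constructor
  · rintro ⟨-, -, e, hnn, hsum, hone⟩
    exact aux_forward s₁ s₂ h₁ h₂ e hnn hsum hone
  · rintro ⟨hn, rfl⟩
    refine ⟨aux_extreme s₁ hn, by simpa [norm_neg] using aux_extreme (-s₁) (by simp [hn]), ?_⟩
    set c : EuclideanSpace ℝ (Fin n) →ᵃ[ℝ] ℝ := AffineMap.const ℝ _ (1/2 : ℝ) with hc
    set l : EuclideanSpace ℝ (Fin n) →ᵃ[ℝ] ℝ :=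
      ((1/2:ℝ) • (innerSL ℝ s₁).toLinearMap).toAffineMap with hl
    have h1 : ∀ x, (c + l) x = 1/2 + (1/2) * ⟪s₁, x⟫ := by intro x; simp [c, l]
    have h2 : ∀ x, (c - l) x = 1/2 - (1/2) * ⟪s₁, x⟫ := by intro x; simp [c, l]
    have hCS : ∀ x : EuclideanSpace ℝ (Fin n), x ∈ closedBall (0:EuclideanSpace ℝ (Fin n)) 1 →
        |⟪s₁, x⟫| ≤ 1 := by
      intro x hx
      rw [mem_closedBall_zero_iff] at hx
      calc |⟪s₁, x⟫| ≤ ‖s₁‖ * ‖x‖ := abs_real_inner_le_norm _ _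
        _ ≤ 1 := by rw [hn]; simpa using hx
    refine ⟨![c + l, c - l], ?_, ?_, ?_⟩
    · intro i x hx
      have := hCS x hx
      rw [abs_le] at this
      fin_cases i
      · show 0 ≤ (c + l) x; rw [h1]; linarith
      · show 0 ≤ (c - l) x; rw [h2]; linarith
    · intro x hx
      rw [Fin.sum_univ_two, Matrix.cons_val_zero, Matrix.cons_val_one, Matrix.cons_val_zero, h1, h2]
      ring
    · intro i
      have hself : ⟪s₁, s₁⟫ = 1 := by
        rw [real_inner_self_eq_norm_mul_norm, hn]; norm_num
      fin_cases i
      · show (c + l) s₁ = 1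
        rw [h1, hself]; norm_num
      · show (c - l) (-s₁) = 1
        rw [h2, inner_neg_right, hself]; norm_num
end
end

section
/- The circular cylinder C = {(x,y,z) ∈ ℝ³ : x²+y²≤1, 0≤z≤1} is not distinguishably decomposable; in particular, the point (0,0,1/4) admits no convex decomposition into distinguishable extreme points of C. -/
noncomputable section

/-- `S` is distinguishably decomposable: every point of `S` is a finite convex combination of
distinguishable extreme points of `S`. -/
def DistinguishablyDecomposable {E : Type*} [NormedAddCommGroup E] [NormedSpace ℝ E]
    (S : Set E) : Prop :=
  ∀ x ∈ S, ∃ (k : ℕ) (s : Fin k → E) (l : Fin k → ℝ),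
    0 < k ∧ (∀ j, s j ∈ Set.extremePoints ℝ S) ∧ Distinguishable S s ∧
    (∀ j, 0 ≤ l j) ∧ (∑ j, l j = 1) ∧ (∑ j, l j • s j = x)

/-- The circular cylinder in `ℝ³`. -/
def Cyl : Set (EuclideanSpace ℝ (Fin 3)) :=
  {p | p 0 ^ 2 + p 1 ^ 2 ≤ 1 ∧ p 2 ∈ Set.Icc (0 : ℝ) 1}

lemma cs_aux (a b x y s : ℝ) (h : x^2 + y^2 = 1) (he : a*x + b*y = s) :
    s^2 ≤ a^2 + b^2 := by subst he; nlinarith [sq_nonneg (a*y - b*x)]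

lemma c_zero_aux (c d : ℝ) (h1 : (c+d)^2 ≤ d^2) (h2 : 0 ≤ c) (h3 : 0 < d) : c = 0 := by
  nlinarith

lemma sq_sum_zero (x y : ℝ) (h : x^2 + y^2 = 0) : x = 0 ∧ y = 0 := by
  constructor <;> nlinarith [sq_nonneg x, sq_nonneg y]

lemma key (a b c d u1 u2 v1 v2 q1 q2 : ℝ)
    (h0 : ∀ x y z : ℝ, x^2 + y^2 ≤ 1 → 0 ≤ z → z ≤ 1 → 0 ≤ a*x + b*y + c*z + d)
    (hu : u1^2 + u2^2 = 1) (hv : v1^2 + v2^2 = 1) (hq : q1^2 + q2^2 = 1)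
    (heu : a*u1 + b*u2 + d = 1) (hev : a*v1 + b*v2 + d = 0)
    (heq : a*q1 + b*q2 + c + d = 0) : v1 = q1 ∧ v2 = q2 := by
  have hd0 : 0 ≤ d := by have := h0 0 0 0 (by norm_num) le_rfl zero_le_one; linarith
  have hcs_v : d^2 ≤ a^2 + b^2 := by
    have h := cs_aux a b v1 v2 (-d) hv (by linarith)
    rw [neg_sq] at h; linarith
  have hab : a^2 + b^2 ≤ d^2 := by
    rcases eq_or_lt_of_le (by positivity : (0:ℝ) ≤ a^2 + b^2) with h | h
    · nlinarith
    · have hn2 : Real.sqrt (a^2 + b^2)^2 = a^2 + b^2 := Real.sq_sqrt (by positivity)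
      set n := Real.sqrt (a^2 + b^2) with hn
      have hnpos : 0 < n := Real.sqrt_pos.mpr h
      have key0 := h0 (-a/n) (-b/n) 0
        (by rw [div_pow, div_pow, ← add_div, hn2]; field_simp; exact le_rfl) le_rfl zero_le_one
      have h2 : a * (-a/n) + b * (-b/n) = -n := by field_simp; nlinarith
      have hdn : n ≤ d := by nlinarith
      nlinarith
  have hd2 : d^2 = a^2 + b^2 := le_antisymm hcs_v hab
  have hdhalf : (2:ℝ)⁻¹ ≤ d := by
    have := cs_aux a b u1 u2 (1 - d) hu (by linarith)
    nlinarith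
  have hdpos : 0 < d := by linarith
  have hv0 : (a + d*v1)^2 + (b + d*v2)^2 = 0 := by
    linear_combination (-1)*hd2 + 2*d*hev + d^2*hv
  obtain ⟨hva', hvb'⟩ := sq_sum_zero _ _ hv0
  have hva : a = -d*v1 := by linarith
  have hvb : b = -d*v2 := by linarith
  have hc0 : 0 ≤ c := by
    have := h0 v1 v2 1 (le_of_eq hv) zero_le_one le_rfl
    simp only [mul_one] at this; linarith
  have hcq : (c + d)^2 ≤ a^2 + b^2 := by
    have h := cs_aux a b q1 q2 (-(c+d)) hq (by linarith)
    rw [neg_sq] at h; linarith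
  have hc : c = 0 := c_zero_aux c d (by rw [hd2]; exact hcq) hc0 hdpos
  have hq0 : (a + d*q1)^2 + (b + d*q2)^2 = 0 := by
    linear_combination (-1)*hd2 + 2*d*heq - 2*d*hc + d^2*hq
  obtain ⟨hqa', hqb'⟩ := sq_sum_zero _ _ hq0
  have hqa : a = -d*q1 := by linarith
  have hqb : b = -d*q2 := by linarith
  constructor
  · exact mul_left_cancel₀ (ne_of_gt hdpos) (by linarith : d * v1 = d * q1)
  · exact mul_left_cancel₀ (ne_of_gt hdpos) (by linarith : d * v2 = d * q2)

def pt (x y z : ℝ) : EuclideanSpace ℝ (Fin 3) := (WithLp.equiv 2 (Fin 3 → ℝ)).symm ![x,y,z]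


lemma pt_zero : pt x y z 0 = x := rfl
lemma pt_one : pt x y z 1 = y := rfl
lemma pt_two : pt x y z 2 = z := rfl

lemma pt_mem_Cyl {x y z : ℝ} (h1 : x^2 + y^2 ≤ 1) (h2 : 0 ≤ z) (h3 : z ≤ 1) :
    pt x y z ∈ Cyl := ⟨h1, h2, h3⟩

lemma pt_decomp (p : EuclideanSpace ℝ (Fin 3)) : p = pt (p 0) (p 1) (p 2) := by
  ext i; fin_cases i <;> rfl

lemma pt_comb (x y z : ℝ) :
    pt x y z = x • (EuclideanSpace.single 0 (1:ℝ)) + y • (EuclideanSpace.single 1 (1:ℝ))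
      + z • (EuclideanSpace.single 2 (1:ℝ)) := by
  ext i; fin_cases i <;> simp [pt, EuclideanSpace.single_apply]

lemma affine_eval (e : EuclideanSpace ℝ (Fin 3) →ᵃ[ℝ] ℝ) (p : EuclideanSpace ℝ (Fin 3)) :
    e p = (e (pt 1 0 0) - e (pt 0 0 0)) * p 0 + (e (pt 0 1 0) - e (pt 0 0 0)) * p 1
      + (e (pt 0 0 1) - e (pt 0 0 0)) * p 2 + e (pt 0 0 0) := by
  have hdec : ∀ q : EuclideanSpace ℝ (Fin 3), e q = e.linear q + e (pt 0 0 0) := by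
    intro q
    have h0 : pt 0 0 0 = (0 : EuclideanSpace ℝ (Fin 3)) := by ext i; fin_cases i <;> rfl
    rw [h0]
    exact congrFun e.decomp q
  have hcomb : p = p 0 • (EuclideanSpace.single 0 (1:ℝ)) + p 1 • (EuclideanSpace.single 1 (1:ℝ))
      + p 2 • (EuclideanSpace.single 2 (1:ℝ)) := by
    conv_lhs => rw [pt_decomp p]
    exact pt_comb _ _ _
  have hlin : e.linear p = p 0 * e.linear (EuclideanSpace.single 0 (1:ℝ))
      + p 1 * e.linear (EuclideanSpace.single 1 (1:ℝ))
      + p 2 * e.linear (EuclideanSpace.single 2 (1:ℝ)) := by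
    conv_lhs => rw [hcomb]
    simp [map_add, map_smul]
  have h1 : pt 1 0 0 = EuclideanSpace.single 0 (1:ℝ) := by
    ext i; fin_cases i <;> simp [pt, EuclideanSpace.single_apply]
  have h2 : pt 0 1 0 = EuclideanSpace.single 1 (1:ℝ) := by
    ext i; fin_cases i <;> simp [pt, EuclideanSpace.single_apply]
  have h3 : pt 0 0 1 = EuclideanSpace.single 2 (1:ℝ) := by
    ext i; fin_cases i <;> simp [pt, EuclideanSpace.single_apply]
  rw [hdec p, hlin, h1, h2, h3, hdec (EuclideanSpace.single 0 (1:ℝ)),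
    hdec (EuclideanSpace.single 1 (1:ℝ)), hdec (EuclideanSpace.single 2 (1:ℝ))]
  ring

lemma mid_aux (x y z ε : ℝ) :
    pt x y z ∈ openSegment ℝ (pt (x+ε) y z) (pt (x-ε) y z) :=
  ⟨1/2, 1/2, by norm_num, by norm_num, by norm_num, by
    ext i; fin_cases i <;> simp [pt] <;> ring⟩

lemma mid_aux_z (x y z ε : ℝ) :
    pt x y z ∈ openSegment ℝ (pt x y (z+ε)) (pt x y (z-ε)) :=
  ⟨1/2, 1/2, by norm_num, by norm_num, by norm_num, by
    ext i; fin_cases i <;> simp [pt] <;> ring⟩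

lemma extreme_char {p : EuclideanSpace ℝ (Fin 3)} (hp : p ∈ Set.extremePoints ℝ Cyl) :
    p 0^2 + p 1^2 = 1 ∧ (p 2 = 0 ∨ p 2 = 1) := by
  obtain ⟨⟨hdisk, hz0, hz1⟩, hext⟩ := hp
  constructor
  · by_contra hne
    have hlt : p 0^2 + p 1^2 < 1 := lt_of_le_of_ne hdisk hne
    set ε := (1 - (p 0^2 + p 1^2))/3 with hε
    have hεpos : 0 < ε := by
      have hnn : (0:ℝ) ≤ p 0^2 + p 1^2 := by positivity
      rw [hε]; linarith
    have hεle : ε ≤ 1/3 := by nlinarith [sq_nonneg (p 0), sq_nonneg (p 1)]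
    have hmem1 : pt (p 0 + ε) (p 1) (p 2) ∈ Cyl := by
      refine pt_mem_Cyl ?_ hz0 hz1
      nlinarith [sq_nonneg (p 0 - 1), sq_nonneg (p 0 + 1)]
    have hmem2 : pt (p 0 - ε) (p 1) (p 2) ∈ Cyl := by
      refine pt_mem_Cyl ?_ hz0 hz1
      nlinarith [sq_nonneg (p 0 - 1), sq_nonneg (p 0 + 1)]
    have := (hext hmem1 hmem2 (by rw [pt_decomp p]; exact mid_aux _ _ _ _))
    have hco := congrFun (congrArg WithLp.ofLp this) 0
    rw [pt_zero, pt_decomp p, pt_zero] at hco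
    linarith
  · by_contra hne
    push_neg at hne
    obtain ⟨h0, h1⟩ := hne
    have hzlt0 : 0 < p 2 := lt_of_le_of_ne hz0 (Ne.symm h0)
    have hzlt1 : p 2 < 1 := lt_of_le_of_ne hz1 h1
    set ε := min (p 2) (1 - p 2) with hε
    have hεpos : 0 < ε := lt_min hzlt0 (by linarith)
    have hmem1 : pt (p 0) (p 1) (p 2 + ε) ∈ Cyl := by
      refine pt_mem_Cyl hdisk (by linarith) ?_
      have := min_le_right (p 2) (1 - p 2); linarith
    have hmem2 : pt (p 0) (p 1) (p 2 - ε) ∈ Cyl := by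
      refine pt_mem_Cyl hdisk ?_ (by linarith)
      have := min_le_left (p 2) (1 - p 2); linarith
    have := (hext hmem1 hmem2 (by rw [pt_decomp p]; exact mid_aux_z _ _ _ _))
    have hco := congrFun (congrArg WithLp.ofLp this) 2
    rw [pt_two, pt_decomp p, pt_two] at hco
    linarith

lemma no_decomp : ¬ ∃ (k : ℕ) (s : Fin k → EuclideanSpace ℝ (Fin 3)) (l : Fin k → ℝ),
    0 < k ∧ (∀ j, s j ∈ Set.extremePoints ℝ Cyl) ∧ Distinguishable Cyl s ∧
    (∀ j, 0 ≤ l j) ∧ (∑ j, l j = 1) ∧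
    (∑ j, l j • s j = (WithLp.equiv 2 (Fin 3 → ℝ)).symm ![0, 0, 1/4]) := by
  rintro ⟨k, s, l, -, hext, ⟨e, he0, hesum, hei⟩, hl0, hl1, hsum⟩
  have hmem : ∀ j, s j ∈ Cyl := fun j => (hext j).1
  have hchar := fun j => extreme_char (hext j)
  have happ : ∀ i : Fin 3, (∑ j, l j • s j) i = ∑ j, l j * s j i := fun i =>
    by simp
  have hrhs : (∑ j, l j • s j) = pt 0 0 (1/4) := hsum
  have hx : ∑ j, l j * s j 0 = 0 := by
    have h := congrArg (fun v : EuclideanSpace ℝ (Fin 3) => v 0) hrhs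
    simp only at h; rw [happ 0] at h; exact h
  have hy : ∑ j, l j * s j 1 = 0 := by
    have h := congrArg (fun v : EuclideanSpace ℝ (Fin 3) => v 1) hrhs
    simp only at h; rw [happ 1] at h; exact h
  have hz : ∑ j, l j * s j 2 = 1/4 := by
    have h := congrArg (fun v : EuclideanSpace ℝ (Fin 3) => v 2) hrhs
    simp only at h; rw [happ 2] at h; exact h
  -- e i vanishes at s j for i ≠ j
  have hzero : ∀ i j, i ≠ j → e i (s j) = 0 := by
    intro i j hij
    have hs := hesum (s j) (hmem j)
    have h1 : e j (s j) = 1 := hei j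
    have h2 : ∑ i ∈ Finset.univ.erase j, e i (s j) = 0 := by
      rw [← Finset.add_sum_erase _ _ (Finset.mem_univ j)] at hs
      linarith
    exact (Finset.sum_eq_zero_iff_of_nonneg
      (fun i _ => he0 i (s j) (hmem j))).mp h2 i
      (Finset.mem_erase.mpr ⟨hij, Finset.mem_univ i⟩)
  -- there is a top point
  have htop : ∃ j, s j 2 = 1 := by
    by_contra h
    push_neg at h
    have hall : ∀ j, s j 2 = 0 := fun j => ((hchar j).2).resolve_right (h j)
    have : ∑ j, l j * s j 2 = 0 := Finset.sum_eq_zero (fun j _ => by rw [hall j, mul_zero])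
    rw [this] at hz; norm_num at hz
  obtain ⟨j3, hj3⟩ := htop
  -- there are two distinct bottom points
  have hbot : ∃ j1 j2, s j1 2 = 0 ∧ s j2 2 = 0 ∧
      ¬(s j1 0 = s j2 0 ∧ s j1 1 = s j2 1) := by
    by_contra h
    push_neg at h
    have hex : ∃ j, 0 < l j * (1 - s j 2) := by
      by_contra hno
      push_neg at hno
      have hsumle : ∑ j, l j * (1 - s j 2) ≤ 0 := Finset.sum_nonpos (fun j _ => hno j)
      have heq2 : ∑ j, l j * (1 - s j 2) = (∑ j, l j) - ∑ j, l j * s j 2 := by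
        rw [← Finset.sum_sub_distrib]
        exact Finset.sum_congr rfl (fun j _ => by ring)
      rw [heq2, hl1, hz] at hsumle
      norm_num at hsumle
    obtain ⟨j0, hj0⟩ := hex
    have hbz : s j0 2 = 0 := by
      rcases (hchar j0).2 with h' | h'
      · exact h'
      · rw [h'] at hj0; norm_num at hj0
    have hlpos : 0 < l j0 := by
      rw [hbz] at hj0; norm_num at hj0; exact hj0
    have hunit : s j0 0 ^ 2 + s j0 1 ^ 2 = 1 := (hchar j0).1
    have hbound : ∀ j, l j * (1 - 2 * s j 2) ≤ l j * (s j0 0 * s j 0 + s j0 1 * s j 1) := by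
      intro j
      rcases (hchar j).2 with h' | h'
      · have h2 := h j0 j hbz h'
        rw [h', ← h2.1, ← h2.2]
        have h3 : s j0 0 * s j0 0 + s j0 1 * s j0 1 = 1 := by nlinarith [hunit]
        rw [h3]; norm_num
      · rw [h']
        have hcs : -(1:ℝ) ≤ s j0 0 * s j 0 + s j0 1 * s j 1 := by
          nlinarith [sq_nonneg (s j0 0 + s j 0), sq_nonneg (s j0 1 + s j 1), hunit, (hchar j).1]
        nlinarith [hl0 j]
    have hsumb : ∑ j, l j * (1 - 2 * s j 2) ≤ ∑ j, l j * (s j0 0 * s j 0 + s j0 1 * s j 1) :=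
      Finset.sum_le_sum (fun j _ => hbound j)
    have hL : ∑ j, l j * (1 - 2 * s j 2) = (∑ j, l j) - 2 * ∑ j, l j * s j 2 := by
      rw [Finset.mul_sum, ← Finset.sum_sub_distrib]
      exact Finset.sum_congr rfl (fun j _ => by ring)
    have hR : ∑ j, l j * (s j0 0 * s j 0 + s j0 1 * s j 1)
        = s j0 0 * (∑ j, l j * s j 0) + s j0 1 * (∑ j, l j * s j 1) := by
      rw [Finset.mul_sum, Finset.mul_sum, ← Finset.sum_add_distrib]
      exact Finset.sum_congr rfl (fun j _ => by ring)
    rw [hL, hl1, hz] at hsumb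
    rw [hR, hx, hy] at hsumb
    norm_num at hsumb
  obtain ⟨j1, j2, hb1, hb2, hdist⟩ := hbot
  have hne12 : j1 ≠ j2 := fun h => hdist (h ▸ ⟨rfl, rfl⟩)
  have hne13 : j1 ≠ j3 := fun h => by rw [h, hj3] at hb1; norm_num at hb1
  have hne23 : j2 ≠ j3 := fun h => by rw [h, hj3] at hb2; norm_num at hb2
  -- apply key lemma with e i for i a bottom index, other bottom index i', top j3
  have hkey : ∀ i i' : Fin k, s i 2 = 0 → s i' 2 = 0 → i ≠ i' → i ≠ j3 →
      s i' 0 = s j3 0 ∧ s i' 1 = s j3 1 := by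
    intro i i' hbi hbi' hii' hij3
    set E := e i with hE
    set d := E (pt 0 0 0) with hd
    set a := E (pt 1 0 0) - d with ha
    set b := E (pt 0 1 0) - d with hb
    set c := E (pt 0 0 1) - d with hc
    have heval : ∀ p : EuclideanSpace ℝ (Fin 3), E p = a * p 0 + b * p 1 + c * p 2 + d :=
      fun p => affine_eval E p
    have h0 : ∀ x y z : ℝ, x^2 + y^2 ≤ 1 → 0 ≤ z → z ≤ 1 → 0 ≤ a*x + b*y + c*z + d := by
      intro x y z h1 h2 h3
      have := he0 i (pt x y z) (pt_mem_Cyl h1 h2 h3)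
      rwa [heval (pt x y z), pt_zero, pt_one, pt_two] at this
    have heu : a * s i 0 + b * s i 1 + d = 1 := by
      have := hei i
      rw [← hE, heval (s i), hbi] at this
      linarith
    have hev : a * s i' 0 + b * s i' 1 + d = 0 := by
      have := hzero i i' hii'
      rw [← hE, heval (s i'), hbi'] at this
      linarith
    have heq : a * s j3 0 + b * s j3 1 + c + d = 0 := by
      have := hzero i j3 hij3
      rw [← hE, heval (s j3), hj3] at this
      linarith
    exact key a b c d (s i 0) (s i 1) (s i' 0) (s i' 1) (s j3 0) (s j3 1) h0
      (hchar i).1 (hchar i').1 (hchar j3).1 heu hev heq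
  have h1 := hkey j1 j2 hb1 hb2 hne12 hne13
  have h2 := hkey j2 j1 hb2 hb1 hne12.symm hne23
  exact hdist ⟨h2.1.trans h1.1.symm, h2.2.trans h1.2.symm⟩

/-- Theorem: the circular cylinder is not distinguishably decomposable; in particular the point
`(0,0,1/4)` has no convex decomposition into distinguishable extreme points. -/
theorem cylinder_not_distinguishably_decomposable :
    ¬ DistinguishablyDecomposable Cyl ∧
    ¬ ∃ (k : ℕ) (s : Fin k → EuclideanSpace ℝ (Fin 3)) (l : Fin k → ℝ),
        0 < k ∧ (∀ j, s j ∈ Set.extremePoints ℝ Cyl) ∧ Distinguishable Cyl s ∧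
        (∀ j, 0 ≤ l j) ∧ (∑ j, l j = 1) ∧
        (∑ j, l j • s j = (WithLp.equiv 2 (Fin 3 → ℝ)).symm ![0, 0, 1/4]) := by
  have hmemx : (WithLp.equiv 2 (Fin 3 → ℝ)).symm ![0, 0, 1/4] ∈ Cyl := by
    refine ⟨?_, ?_, ?_⟩ <;> norm_num [Cyl]
    · show (0:ℝ) ≤ 1/4; norm_num
    · show (1/4:ℝ) ≤ 1; norm_num
  refine ⟨?_, no_decomp⟩
  intro hDD
  obtain ⟨k, s, l, h⟩ := hDD _ hmemx
  exact no_decomp ⟨k, s, l, h⟩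
end
end

section
/- Let G be an infinite compact subgroup of the orthogonal group O(n). Then G contains an element of infinite order. -/
noncomputable section

namespace InfOrderAux

open Complex Real Filter Topology

abbrev Esp (n : ℕ) := EuclideanSpace ℂ (Fin n)
abbrev CLM (n : ℕ) := Esp n →L[ℂ] Esp n

variable {n : ℕ}

def psi (n : ℕ) : Matrix (Fin n) (Fin n) ℝ → CLM n :=
  fun m => Matrix.toEuclideanCLM (𝕜 := ℂ) (m.map Complex.ofRealHom)

lemma psi_mul (a b : Matrix (Fin n) (Fin n) ℝ) : psi n (a * b) = psi n a * psi n b := by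
  simp [psi, Matrix.map_mul, map_mul]

lemma psi_one : psi n 1 = 1 := by simp [psi]

lemma psi_pow (a : Matrix (Fin n) (Fin n) ℝ) (m : ℕ) : psi n (a ^ m) = (psi n a) ^ m := by
  induction m with
  | zero => simpa using psi_one
  | succ m ih => rw [pow_succ, pow_succ, psi_mul, ih]

lemma psi_star (g : Matrix (Fin n) (Fin n) ℝ) : psi n (star g) = star (psi n g) := by
  rw [psi, psi, ← map_star]
  congr 1
  ext i j
  simp [Matrix.conjTranspose_apply, Matrix.map_apply, Matrix.star_apply]

lemma psi_unitary {g : Matrix (Fin n) (Fin n) ℝ} (hg : g ∈ Matrix.orthogonalGroup (Fin n) ℝ) :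
    psi n g ∈ unitary (CLM n) := by
  have h1 := Unitary.mem_iff.mp hg
  constructor
  · rw [← psi_star, ← psi_mul, h1.1, psi_one]
  · rw [← psi_star, ← psi_mul, h1.2, psi_one]

def clmLin (n : ℕ) : Matrix (Fin n) (Fin n) ℂ →ₗ[ℂ] CLM n where
  toFun := Matrix.toEuclideanCLM (𝕜 := ℂ)
  map_add' a b := map_add _ a b
  map_smul' c a := map_smul (Matrix.toEuclideanCLM (𝕜 := ℂ) (n := Fin n)) c a

lemma psi_continuous : Continuous (psi n) := by
  have h1 : Continuous (fun m : Matrix (Fin n) (Fin n) ℝ => m.map Complex.ofRealHom) := by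
    apply continuous_pi; intro i; apply continuous_pi; intro j
    exact Complex.continuous_ofReal.comp ((continuous_apply j).comp (continuous_apply i))
  exact (clmLin n).continuous_of_finiteDimensional.comp h1

lemma psi_injective : Function.Injective (psi n) := by
  intro a b h
  have h2 := Matrix.toEuclideanCLM (𝕜 := ℂ) (n := Fin n) |>.injective h
  ext i j
  have := congrArg (fun m : Matrix (Fin n) (Fin n) ℂ => (m i j).re) h2
  simpa [Matrix.map_apply] using this

lemma spec_shift {A : Type*} [NormedRing A] [NormedAlgebra ℂ A] {a : A} {μ : ℂ}
    (h : μ ∈ spectrum ℂ a) : μ - 1 ∈ spectrum ℂ (a - 1) := by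
  rw [spectrum.mem_iff] at h ⊢
  convert h using 2
  rw [map_sub, map_one]
  abel

lemma abs_sub_one_ge {z : ℂ} (habs : ‖z‖ = 1) (hre : z.re ≤ 0) :
    1 ≤ ‖z - 1‖ := by
  have h1 : Complex.normSq (z - 1) = 2 - 2 * z.re := by
    have h2 : Complex.normSq z = 1 := by rw [← Complex.sq_norm, habs]; norm_num
    simp [Complex.normSq_apply] at h2 ⊢
    nlinarith
  have h3 : 1 ≤ Complex.normSq (z - 1) := by rw [h1]; linarith
  calc (1:ℝ) = Real.sqrt 1 := by simp
    _ ≤ Real.sqrt (Complex.normSq (z-1)) := Real.sqrt_le_sqrt h3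
    _ = ‖z - 1‖ := rfl

lemma escape_re (lam : ℂ) (habs : ‖lam‖ = 1) (hne : lam ≠ 1) :
    ∃ e : ℕ, (lam ^ (2^e : ℕ)).re ≤ 0 := by
  by_contra hall
  push_neg at hall
  have habs' : ∀ e : ℕ, ‖lam ^ (2^e : ℕ)‖ = 1 := by
    intro e; rw [norm_pow, habs, one_pow]
  have hre_lt : (lam).re < 1 := by
    rcases lt_or_eq_of_le (Complex.re_le_norm lam) with h | h
    · linarith [habs ▸ h]
    · exfalso
      apply hne
      have h1 : lam.re = 1 := by rw [h, habs]
      have h2 : Complex.normSq lam = 1 := by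
        rw [← Complex.sq_norm, habs]; norm_num
      have h4 : lam.im ^ 2 = 0 := by
        have := Complex.normSq_apply lam
        nlinarith [this, h1, h2]
      have him : lam.im = 0 := by nlinarith
      exact Complex.ext h1 him
  set x : ℕ → ℝ := fun e => (lam ^ (2^e : ℕ)).re with hx
  have hrec : ∀ e, x (e+1) = 2 * (x e)^2 - 1 := by
    intro e
    have hpow : lam ^ (2^(e+1) : ℕ) = (lam ^ (2^e : ℕ))^2 := by
      rw [← pow_mul, pow_succ]
    have hn1 : Complex.normSq (lam ^ (2^e : ℕ)) = 1 := by
      rw [← Complex.sq_norm, habs' e]; norm_num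
    have := Complex.normSq_apply (lam ^ (2^e : ℕ))
    simp only [hx, hpow, Complex.sq_norm, sq, Complex.mul_re]
    nlinarith [this, hn1]
  have hgrow : ∀ e, 1 - x e ≥ 2^e * (1 - x 0) := by
    intro e
    induction e with
    | zero => simp
    | succ e ih =>
      have h1 : x e > 0 := hall e
      have h2 : x e ≤ 1 := by
        calc x e ≤ ‖lam ^ (2^e:ℕ)‖ := Complex.re_le_norm _
        _ = 1 := habs' e
      have h5 : 1 - x (e+1) = 2 * (1 - x e) * (1 + x e) := by rw [hrec e]; ring
      have hge : 1 - x (e+1) ≥ 2 * (1 - x e) := by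
        rw [h5]
        nlinarith [ih, h1, h2]
      calc 1 - x (e+1) ≥ 2 * (1 - x e) := hge
        _ ≥ 2 * (2^e * (1 - x 0)) := by nlinarith [ih]
        _ = 2^(e+1) * (1 - x 0) := by ring
  have h0 : 1 - x 0 > 0 := by simp [hx]; linarith
  obtain ⟨e, he⟩ := pow_unbounded_of_one_lt (2 / (1 - x 0)) (by norm_num : (1:ℝ) < 2)
  have hxe : x e > 0 := hall e
  have hb1 : 1 - x e ≤ 1 := by linarith
  have hb2 : (2:ℝ)^e * (1 - x 0) ≤ 1 := le_trans (hgrow e) hb1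
  have hb3 : (2:ℝ)^e ≤ 1 / (1-x 0) := by
    rw [le_div_iff₀ h0]; linarith
  have hdiff : 2/(1-x 0) - 1/(1-x 0) = 1/(1-x 0) := by ring
  have hpos : 0 < 1/(1-x 0) := one_div_pos.mpr h0
  linarith

variable [Nontrivial (Esp n)]

lemma clm_nontrivial : Nontrivial (CLM n) := by
  obtain ⟨v, w, hvw⟩ := exists_pair_ne (Esp n)
  refine ⟨1, 0, fun h => hvw ?_⟩
  have hv := congrArg (fun T : CLM n => T v) h
  have hw := congrArg (fun T : CLM n => T w) h
  simp at hv hw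
  rw [hv, hw]

omit [Nontrivial (Esp n)] in
lemma star_normal_sub_one {u : CLM n} (hu : u ∈ unitary (CLM n)) : IsStarNormal (u - 1) := by
  constructor
  have h1 := Unitary.mem_iff.mp hu
  have hs : star (u - 1) = star u - 1 := by rw [star_sub u 1, star_one]
  rw [Commute, SemiconjBy, hs]
  simp only [mul_sub, sub_mul, mul_one, one_mul, h1.1, h1.2]
  abel

lemma exists_spec_far {u : CLM n} (hu : u ∈ unitary (CLM n)) :
    ∃ μ ∈ spectrum ℂ u, ‖μ - 1‖ = ‖u - 1‖ := by
  haveI : Nontrivial (CLM n) := clm_nontrivial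
  haveI : IsStarNormal (u - 1) := star_normal_sub_one hu
  have hrad : spectralRadius ℂ (u - 1) = ‖u - 1‖₊ := IsStarNormal.spectralRadius_eq_nnnorm (u-1)
  obtain ⟨z, hz, hznorm⟩ := spectrum.exists_nnnorm_eq_spectralRadius (u - 1)
  have hzn : ‖z‖ = ‖u - 1‖ := by
    rw [hrad] at hznorm
    have : ‖z‖₊ = ‖u - 1‖₊ := by exact_mod_cast hznorm
    exact congrArg NNReal.toReal this
  refine ⟨z + 1, ?_, ?_⟩
  · rw [spectrum.mem_iff]
    rw [spectrum.mem_iff] at hz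
    convert hz using 2
    rw [map_add, map_one]
    abel
  · rw [add_sub_cancel_right]
    exact hzn

lemma unitary_escape {u : CLM n} (hu : u ∈ unitary (CLM n)) (hne : u ≠ 1) :
    ∃ e : ℕ, 1/2 < ‖u ^ (2^e : ℕ) - 1‖ := by
  haveI : Nontrivial (CLM n) := clm_nontrivial
  obtain ⟨μ, hmu, hfar⟩ := exists_spec_far hu
  have hpos : (0:ℝ) < ‖u - 1‖ := by
    rw [norm_pos_iff]
    exact sub_ne_zero.mpr hne
  have hμabs : ‖μ‖ = 1 := by
    have := spectrum.subset_circle_of_unitary hu hmu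
    simpa using this
  have hμne : μ ≠ 1 := by
    intro h
    rw [h] at hfar
    simp at hfar
    linarith [hfar ▸ hpos]
  obtain ⟨e, he⟩ := escape_re μ hμabs hμne
  refine ⟨e, ?_⟩
  have hμpow : μ ^ (2^e : ℕ) ∈ spectrum ℂ (u ^ (2^e : ℕ)) := by
    rw [spectrum.map_pow]
    exact ⟨μ, hmu, rfl⟩
  have h1 : μ ^ (2^e:ℕ) - 1 ∈ spectrum ℂ (u ^ (2^e:ℕ) - 1) := spec_shift hμpow
  have h2 : ‖μ ^ (2^e:ℕ) - 1‖ ≤ ‖u ^ (2^e:ℕ) - 1‖ := by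
    have := spectrum.norm_le_norm_of_mem h1
    simpa using this
  have h3 : 1 ≤ ‖μ ^ (2^e:ℕ) - 1‖ :=
    abs_sub_one_ge (by rw [norm_pow, hμabs, one_pow]) he
  linarith

lemma pow_sub_one_le {u : CLM n} (hu : u ∈ unitary (CLM n)) (m : ℕ) :
    ‖u ^ m - 1‖ ≤ m * ‖u - 1‖ := by
  haveI : Nontrivial (Esp n) := inferInstance
  induction m with
  | zero => simp
  | succ m ih =>
    have hsplit : u ^ (m+1) - 1 = u ^ m * (u - 1) + (u ^ m - 1) := by
      rw [mul_sub, mul_one, ← pow_succ]; abel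
    rw [hsplit]
    calc ‖u ^ m * (u - 1) + (u ^ m - 1)‖ ≤ ‖u ^ m * (u-1)‖ + ‖u^m - 1‖ := norm_add_le _ _
      _ ≤ ‖u^m‖ * ‖u-1‖ + ‖u^m - 1‖ := by gcongr; exact norm_mul_le _ _
      _ ≤ 1 * ‖u-1‖ + m * ‖u-1‖ := by
          have hnu : ‖u ^ m‖ = 1 := CStarRing.norm_of_mem_unitary (pow_mem hu m)
          exact add_le_add (by rw [hnu]) ih
      _ = (m+1 : ℕ) * ‖u-1‖ := by push_cast; ring

lemma eq_exp_arg {z : ℂ} (habs : ‖z‖ = 1) : z = Complex.exp (z.arg * Complex.I) := by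
  conv_lhs => rw [← Complex.norm_mul_exp_arg_mul_I z]
  rw [habs]; simp

lemma pow_exp_arg {z : ℂ} (habs : ‖z‖ = 1) (m : ℕ) :
    z ^ m = Complex.exp ((m * z.arg : ℝ) * Complex.I) := by
  conv_lhs => rw [eq_exp_arg habs]
  rw [← Complex.exp_nat_mul]
  push_cast
  ring_nf

lemma arg_sq_eq {z : ℂ} (habs : ‖z‖ = 1) (hclose : ‖z - 1‖ ≤ 1/2) :
    (z^2).arg = 2 * z.arg := by
  have hre : 0 < z.re := by
    have h2 : Complex.normSq z = 1 := by rw [← Complex.sq_norm, habs]; norm_num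
    have h3 : Complex.normSq (z - 1) ≤ 1/4 := by
      have := Complex.sq_norm (z-1)
      nlinarith [hclose, norm_nonneg (z-1)]
    simp [Complex.normSq_apply] at h2 h3
    nlinarith
  have harg : |z.arg| < π/2 := Complex.abs_arg_lt_pi_div_two_iff.mpr (Or.inl hre)
  have hsq : z^2 = Complex.exp ((2 * z.arg : ℝ) * Complex.I) := pow_exp_arg habs 2
  rw [hsq]
  have hmem : (2 * z.arg : ℝ) ∈ Set.Ioc (-π) π := by
    constructor
    · nlinarith [abs_lt.mp harg, Real.pi_pos]
    · nlinarith [abs_lt.mp harg]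
  rw [show ((2 * z.arg : ℝ) : ℂ) * Complex.I = _ from rfl]
  rw [Complex.exp_mul_I]
  have := Complex.arg_cos_add_sin_mul_I hmem
  simpa using this

lemma final_ne_one (N : ℕ) (hN : 0 < N) (sg : ℝ) (hσ : sg = 1 ∨ sg = -1) :
    Complex.exp (Complex.ofReal ((N : ℝ) * (sg * (2 * π * Real.sqrt 2))) * Complex.I) ≠ 1 := by
  intro heq
  rw [Complex.exp_eq_one_iff] at heq
  obtain ⟨k, hk⟩ := heq
  have h2 : Complex.ofReal ((N : ℝ) * (sg * (2 * π * Real.sqrt 2))) * Complex.I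
      = ((k:ℂ)*(2*π)) * Complex.I := by rw [hk]; ring
  have h3 : Complex.ofReal ((N : ℝ) * (sg * (2 * π * Real.sqrt 2))) = (k:ℂ)*(2*π) :=
    mul_right_cancel₀ Complex.I_ne_zero h2
  have hkr : (N : ℝ) * (sg * (2 * π * Real.sqrt 2)) = (k:ℝ)*(2*π) := by exact_mod_cast h3
  have hpi : (0:ℝ) < 2 * π := by positivity
  have hirr : Irrational ((N:ℝ) * Real.sqrt 2) :=
    irrational_sqrt_two.natCast_mul (by exact_mod_cast hN.ne')
  rcases hσ with h | h <;> subst h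
  · apply hirr.ne_int k
    have : (N:ℝ) * Real.sqrt 2 * (2*π) = (k:ℝ) * (2*π) := by nlinarith [hkr]
    exact mul_right_cancel₀ hpi.ne' this
  · apply hirr.ne_int (-k)
    have : (N:ℝ) * Real.sqrt 2 * (2*π) = ((-k : ℤ):ℝ) * (2*π) := by push_cast; nlinarith [hkr]
    exact mul_right_cancel₀ hpi.ne' this

end InfOrderAux
set_option maxHeartbeats 2000000 in
open InfOrderAux Complex Real Filter Topology in
/-- Theorem: an infinite compact subgroup of the orthogonal group `O(n)` contains an element of
infinite order. -/
theorem infinite_compact_subgroup_has_elt_of_infinite_order {n : ℕ}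
    (G : Subgroup (Matrix.orthogonalGroup (Fin n) ℝ))
    (hinf : (G : Set (Matrix.orthogonalGroup (Fin n) ℝ)).Infinite)
    (hcpt : IsCompact (((↑) : Matrix.orthogonalGroup (Fin n) ℝ → Matrix (Fin n) (Fin n) ℝ) ''
      (G : Set (Matrix.orthogonalGroup (Fin n) ℝ)))) :
    ∃ g ∈ G, ¬ IsOfFinOrder g := by
  classical
  -- the case `n = 0` is impossible
  rcases Nat.eq_zero_or_pos n with hn0 | hn
  · exfalso
    apply hinf
    subst hn0
    apply Set.Finite.subset (Set.finite_singleton (1 : Matrix.orthogonalGroup (Fin 0) ℝ))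
    intro g _
    have hg1 : (g : Matrix (Fin 0) (Fin 0) ℝ)
        = ((1 : Matrix.orthogonalGroup (Fin 0) ℝ) : Matrix (Fin 0) (Fin 0) ℝ) := by
      ext i j
      exact absurd i.2 (by omega)
    simpa using Subtype.ext hg1
  haveI hEsp : Nontrivial (Esp n) := by
    refine ⟨0, EuclideanSpace.single ⟨0, hn⟩ 1, fun h => ?_⟩
    have := congrFun (congrArg (fun v : Esp n => (v : Fin n → ℂ)) h) ⟨0, hn⟩
    simp at this
  haveI : Nontrivial (CLM n) := clm_nontrivial
  -- transfer everything to the C*-algebra of continuous endomorphisms of ℂ^n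
  set Φ : Matrix.orthogonalGroup (Fin n) ℝ → CLM n :=
    fun g => psi n (g : Matrix (Fin n) (Fin n) ℝ) with hΦ
  set S : Set (CLM n) := Φ '' (G : Set (Matrix.orthogonalGroup (Fin n) ℝ)) with hSdef
  have hScpt : IsCompact S := by
    have hrw : S = psi n '' (((↑) : Matrix.orthogonalGroup (Fin n) ℝ → Matrix (Fin n) (Fin n) ℝ) ''
        (G : Set (Matrix.orthogonalGroup (Fin n) ℝ))) := by
      rw [hSdef, Set.image_image]
    rw [hrw]
    exact hcpt.image psi_continuous
  have hΦinj : Function.Injective Φ := fun g h hx => Subtype.coe_injective (psi_injective hx)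
  have hSinf : S.Infinite := hinf.image hΦinj.injOn
  -- closure properties of S
  have hmulS : ∀ x ∈ S, ∀ y ∈ S, x * y ∈ S := by
    rintro x ⟨g, hg, rfl⟩ y ⟨h, hh, rfl⟩
    refine ⟨g * h, mul_mem hg hh, ?_⟩
    rw [hΦ]
    push_cast [MulMemClass.coe_mul]
    rw [psi_mul]
  have hpowS : ∀ x ∈ S, ∀ m : ℕ, x ^ m ∈ S := by
    rintro x ⟨g, hg, rfl⟩ m
    refine ⟨g ^ m, pow_mem hg m, ?_⟩
    rw [hΦ]
    push_cast [SubmonoidClass.coe_pow]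
    rw [psi_pow]
  have hunitS : ∀ x ∈ S, x ∈ unitary (CLM n) := by
    rintro x ⟨g, hg, rfl⟩
    exact psi_unitary g.2
  have hinvS : ∀ x ∈ S, ∃ y ∈ S, x * y = 1 ∧ y * x = 1 := by
    rintro x ⟨g, hg, rfl⟩
    refine ⟨Φ g⁻¹, ⟨g⁻¹, inv_mem hg, rfl⟩, ?_, ?_⟩
    · rw [hΦ]
      simp only
      rw [← psi_mul, ← MulMemClass.coe_mul, mul_inv_cancel, OneMemClass.coe_one, psi_one]
    · rw [hΦ]
      simp only
      rw [← psi_mul, ← MulMemClass.coe_mul, inv_mul_cancel, OneMemClass.coe_one, psi_one]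
  -- accumulation point of S
  obtain ⟨x, hxS, hacc⟩ := hSinf.exists_accPt_of_subset_isCompact hScpt Set.Subset.rfl
  haveI hNB : (𝓝[≠] x ⊓ 𝓟 S).NeBot := hacc
  set V : Ultrafilter (CLM n) := Ultrafilter.of (𝓝[≠] x ⊓ 𝓟 S) with hVdef
  have hVle : (V : Filter (CLM n)) ≤ 𝓝[≠] x ⊓ 𝓟 S := Ultrafilter.of_le _
  have hidV : Tendsto id (V : Filter (CLM n)) (𝓝 x) :=
    (hVle.trans inf_le_left).trans nhdsWithin_le_nhds
  have hevS : ∀ᶠ y in (V : Filter (CLM n)), y ∈ S :=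
    hVle (mem_inf_of_right (mem_principal_self S))
  have hevne : ∀ᶠ y in (V : Filter (CLM n)), y ≠ x :=
    hVle (mem_inf_of_left self_mem_nhdsWithin)
  -- the net `a y = y * x⁻¹` converges to 1
  obtain ⟨xi, hxiS, hxxi, hxix⟩ := hinvS x hxS
  set a : CLM n → CLM n := fun y => y * xi with hadef
  have haV : Tendsto a (V : Filter (CLM n)) (𝓝 1) := by
    have h1 : Tendsto a (V : Filter (CLM n)) (𝓝 (x * xi)) :=
      Tendsto.mul (f := id) hidV tendsto_const_nhds
    rwa [hxxi] at h1
  have heva_S : ∀ᶠ y in (V : Filter (CLM n)), a y ∈ S :=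
    hevS.mono fun y hy => hmulS y hy xi hxiS
  have heva_ne : ∀ᶠ y in (V : Filter (CLM n)), a y ≠ 1 := by
    refine hevne.mono fun y hy h1 => hy ?_
    calc y = y * (xi * x) := by rw [hxix, mul_one]
      _ = (y * xi) * x := by rw [mul_assoc]
      _ = x := by
          have h1' : y * xi = 1 := h1
          rw [h1', one_mul]
  -- escape-time function
  set P : CLM n → ℕ → Prop := fun b e => 1/2 < ‖b ^ ((2:ℕ)^e) - 1‖ with hPdef
  set E : CLM n → ℕ := fun b => if h : ∃ e : ℕ, P b e then Nat.find h else 0 with hEdef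
  have hEspec : ∀ b : CLM n, (∃ e : ℕ, P b e) → P b (E b) := by
    intro b hb
    rw [hEdef]
    simp only [dif_pos hb]
    exact Nat.find_spec hb
  have hEmin : ∀ b : CLM n, (hb : ∃ e : ℕ, P b e) → ∀ e < E b, ‖b ^ ((2:ℕ)^e) - 1‖ ≤ 1/2 := by
    intro b hb e he
    rw [hEdef] at he
    simp only [dif_pos hb] at he
    have := Nat.find_min hb he
    rw [hPdef] at this
    simpa using not_lt.mp this
  have hex : ∀ᶠ y in (V : Filter (CLM n)), ∃ e : ℕ, P (a y) e := by
    refine (heva_S.and heva_ne).mono fun y ⟨h1, h2⟩ => ?_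
    obtain ⟨e, he⟩ := unitary_escape (hunitS _ h1) h2
    exact ⟨e, he⟩
  -- escape times tend to infinity
  have hEbig : ∀ i : ℕ, ∀ᶠ y in (V : Filter (CLM n)), i < E (a y) := by
    intro i
    have hsmall : ∀ᶠ y in (V : Filter (CLM n)), ‖a y - 1‖ < (1/2)^(i+1) := by
      have := Metric.tendsto_nhds.mp haV ((1/2)^(i+1)) (by positivity)
      refine this.mono fun y hy => ?_
      rwa [dist_eq_norm] at hy
    refine ((hsmall.and heva_S).and hex).mono fun y ⟨⟨h1, h2⟩, h3⟩ => ?_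
    have h4 := hEspec _ h3
    rw [hPdef] at h4
    have h5 : ‖(a y) ^ ((2:ℕ)^(E (a y))) - 1‖ ≤ (2:ℝ)^(E (a y)) * ‖a y - 1‖ := by
      have := pow_sub_one_le (hunitS _ h2) ((2:ℕ)^(E (a y)))
      push_cast at this
      exact this
    have h6 : (1:ℝ)/2 < (2:ℝ)^(E (a y)) * (1/2)^(i+1) := by
      calc (1:ℝ)/2 < ‖(a y) ^ ((2:ℕ)^(E (a y))) - 1‖ := h4
        _ ≤ (2:ℝ)^(E (a y)) * ‖a y - 1‖ := h5
        _ ≤ (2:ℝ)^(E (a y)) * (1/2)^(i+1) := by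
            apply mul_le_mul_of_nonneg_left h1.le (by positivity)
    have h7 : (2:ℝ)^i < (2:ℝ)^(E (a y)) := by
      have hhalf : ((1:ℝ)/2)^(i+1) = 1 / 2^(i+1) := by
        rw [div_pow, one_pow]
      rw [hhalf] at h6
      have h8 : (2:ℝ)^(i+1) * (1/2) < (2:ℝ)^(E (a y)) := by
        rw [mul_comm]
        calc (1:ℝ)/2 * 2^(i+1) < (2:ℝ)^(E (a y)) * (1 / 2^(i+1)) * 2^(i+1) := by
              apply mul_lt_mul_of_pos_right h6 (by positivity)
          _ = (2:ℝ)^(E (a y)) := by field_simp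
      calc (2:ℝ)^i = (2:ℝ)^(i+1) * (1/2) := by ring
        _ < _ := h8
    exact (pow_lt_pow_iff_right₀ (by norm_num : (1:ℝ) < 2)).mp h7
  -- dyadic limit points r i
  set f : ℕ → CLM n → CLM n := fun i y => (a y) ^ ((2:ℕ)^(E (a y) - i)) with hfdef
  have hrex : ∀ i : ℕ, ∃ q ∈ S, Tendsto (f i) (V : Filter (CLM n)) (𝓝 q) := by
    intro i
    have hmem : ∀ᶠ y in (V : Filter (CLM n)), f i y ∈ S :=
      heva_S.mono fun y hy => hpowS _ hy _
    obtain ⟨q, hqS, hq⟩ := hScpt.ultrafilter_le_nhds (V.map (f i))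
      (by rwa [Ultrafilter.coe_map, le_principal_iff, mem_map])
    exact ⟨q, hqS, hq⟩
  choose r hrS hrt using hrex
  have hrunit : ∀ i, r i ∈ unitary (CLM n) := fun i => hunitS _ (hrS i)
  -- the square relation
  have hsq : ∀ i, r (i+1) * r (i+1) = r i := by
    intro i
    have h1 : Tendsto (fun y => f (i+1) y * f (i+1) y) (V : Filter (CLM n))
        (𝓝 (r (i+1) * r (i+1))) := (hrt (i+1)).mul (hrt (i+1))
    have h2 : (fun y => f (i+1) y * f (i+1) y) =ᶠ[(V : Filter (CLM n))] f i := by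
      refine (hEbig i).mono fun y hy => ?_
      rw [hfdef]
      simp only
      rw [← pow_add]
      congr 1
      have : E (a y) - (i+1) + 1 = E (a y) - i := by omega
      rw [← this, pow_succ]
      ring
    exact tendsto_nhds_unique (h1.congr' h2) (hrt i)
  -- r 0 is far from 1
  have hr0 : 1/2 ≤ ‖r 0 - 1‖ := by
    have h1 : Tendsto (fun y => ‖f 0 y - 1‖) (V : Filter (CLM n)) (𝓝 ‖r 0 - 1‖) :=
      ((hrt 0).sub tendsto_const_nhds).norm
    refine ge_of_tendsto h1 ?_
    refine hex.mono fun y hy => ?_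
    have := hEspec _ hy
    rw [hPdef] at this
    rw [hfdef]
    simp only [Nat.sub_zero]
    exact this.le
  -- r i is close to 1 for i ≥ 1
  have hrhalf : ∀ i, 1 ≤ i → ‖r i - 1‖ ≤ 1/2 := by
    intro i hi
    have h1 : Tendsto (fun y => ‖f i y - 1‖) (V : Filter (CLM n)) (𝓝 ‖r i - 1‖) :=
      ((hrt i).sub tendsto_const_nhds).norm
    refine le_of_tendsto h1 ?_
    refine ((hEbig i).and hex).mono fun y ⟨hy1, hy2⟩ => ?_
    have hlt : E (a y) - i < E (a y) := by omega
    exact hEmin _ hy2 _ hlt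
  -- spectral chain
  obtain ⟨lam0, hlam0mem, hlam0far⟩ := exists_spec_far (hrunit 0)
  have hlam0_ge : 1/2 ≤ ‖lam0 - 1‖ := by rw [hlam0far]; exact hr0
  have key : ∀ i, ∀ ν ∈ spectrum ℂ (r i), ∃ ρ, ρ ∈ spectrum ℂ (r (i+1)) ∧ ρ^2 = ν := by
    intro i ν hν
    have hpow2 : (r (i+1))^2 = r i := by rw [sq, hsq i]
    have hspec : spectrum ℂ (r i) = (· ^ 2) '' spectrum ℂ (r (i+1)) := by
      rw [← hpow2, spectrum.map_pow]
    rw [hspec] at hν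
    obtain ⟨ρ, hρ, hρ2⟩ := hν
    exact ⟨ρ, hρ, hρ2⟩
  set mu : ∀ i : ℕ, {ν : ℂ // ν ∈ spectrum ℂ (r i)} := fun i => Nat.rec ⟨lam0, hlam0mem⟩
    (fun j prev => ⟨Classical.choose (key j prev.1 prev.2),
      (Classical.choose_spec (key j prev.1 prev.2)).1⟩) i with hmudef
  have hmu0 : (mu 0).1 = lam0 := rfl
  have hmusq : ∀ i, (mu (i+1)).1 ^ 2 = (mu i).1 := fun i =>
    (Classical.choose_spec (key i (mu i).1 (mu i).2)).2
  have hmuabs : ∀ i, ‖(mu i).1‖ = 1 := by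
    intro i
    have := spectrum.subset_circle_of_unitary (hrunit i) (mu i).2
    simpa using this
  have hmuclose : ∀ i, ‖(mu i).1 - 1‖ ≤ ‖r i - 1‖ := by
    intro i
    have := spectrum.norm_le_norm_of_mem (spec_shift (mu i).2)
    simpa using this
  have hmuhalf : ∀ i, 1 ≤ i → ‖(mu i).1 - 1‖ ≤ 1/2 :=
    fun i hi => (hmuclose i).trans (hrhalf i hi)
  have hargd : ∀ i, ((mu i).1).arg = 2 * ((mu (i+1)).1).arg := by
    intro i
    rw [← hmusq i]
    exact arg_sq_eq (hmuabs (i+1)) (hmuhalf (i+1) (by omega))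
  set th0 : ℝ := lam0.arg with hth0def
  have harg : ∀ i, ((mu i).1).arg = th0 / 2^i := by
    intro i
    induction i with
    | zero => rw [hmu0]; simp [hth0def]
    | succ i ih =>
      have h1 := hargd i
      rw [ih] at h1
      have h3 : (2:ℝ)^i ≠ 0 := by positivity
      have h4 : th0 = 2 * ((mu (i+1)).1.arg) * 2^i := by
        rw [div_eq_iff h3] at h1
        linarith
      rw [eq_div_iff (pow_ne_zero _ (two_ne_zero' ℝ))]
      rw [h4]
      ring
  have hth0ne : th0 ≠ 0 := by
    intro h0
    have h1 : lam0 = 1 := by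
      have := eq_exp_arg (hmu0 ▸ hmuabs 0)
      rw [← hth0def, h0] at this
      simpa using this
    rw [h1] at hlam0_ge
    simp at hlam0_ge
    linarith
  -- choice of exponents
  set c : ℝ := 2 * π * Real.sqrt 2 / |th0| with hcdef
  have hcpos : 0 < c := by
    apply div_pos (by positivity) (abs_pos.mpr hth0ne)
  set s : ℕ → ℕ := fun i => ⌊(2:ℝ)^i * c⌋₊ with hsdef
  have hmain : Tendsto (fun i : ℕ => (s i : ℝ) / 2^i) atTop (𝓝 c) := by
    have hg : Tendsto (fun i : ℕ => c - (1/2:ℝ)^i) atTop (𝓝 c) := by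
      have h0 : Tendsto (fun i : ℕ => ((1:ℝ)/2)^i) atTop (𝓝 0) :=
        tendsto_pow_atTop_nhds_zero_of_lt_one (by norm_num) (by norm_num)
      simpa using tendsto_const_nhds.sub h0
    refine tendsto_of_tendsto_of_tendsto_of_le_of_le hg tendsto_const_nhds ?_ ?_
    · intro i
      show c - (1/2:ℝ)^i ≤ (s i : ℝ)/2^i
      have h2 : (0:ℝ) < (2:ℝ)^i := by positivity
      have h1 : (2:ℝ)^i * c < (s i : ℝ) + 1 := Nat.lt_floor_add_one _
      have hkey : c ≤ ((s i : ℝ) + 1)/2^i := by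
        rw [le_div_iff₀ h2]; nlinarith
      have hhalfpow : ((1:ℝ)/2)^i = 1/2^i := by rw [div_pow, one_pow]
      have hsplit : ((s i:ℝ) + 1)/2^i = (s i:ℝ)/2^i + 1/2^i := add_div _ _ _
      rw [hhalfpow]
      linarith [hkey, hsplit.symm.le]
    · intro i
      show (s i : ℝ)/2^i ≤ c
      have h2 : (0:ℝ) < (2:ℝ)^i := by positivity
      have h1 : (s i:ℝ) ≤ (2:ℝ)^i * c := Nat.floor_le (by positivity)
      rw [div_le_iff₀ h2]
      nlinarith
  have hangle : Tendsto (fun i : ℕ => (s i : ℝ) * ((mu i).1).arg) atTop (𝓝 (c * th0)) := by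
    have h1 := hmain.mul_const th0
    refine h1.congr fun i => ?_
    rw [harg i]
    ring
  -- the limit z along an ultrafilter over ℕ
  haveI : (atTop : Filter ℕ).NeBot := atTop_neBot
  set W : Ultrafilter ℕ := Ultrafilter.of atTop with hWdef
  have hWle : (W : Filter ℕ) ≤ atTop := Ultrafilter.of_le _
  obtain ⟨z, hzS, hzt⟩ := hScpt.ultrafilter_le_nhds (W.map (fun i => (r i) ^ (s i)))
    (by
      rw [Ultrafilter.coe_map, le_principal_iff, mem_map]
      exact Filter.univ_mem' fun i => hpowS _ (hrS i) _)
  -- z has infinite order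
  have hzt' : Tendsto (fun i => (r i) ^ (s i)) (W : Filter ℕ) (𝓝 z) := by
    rw [Tendsto, ← Ultrafilter.coe_map]
    exact hzt
  have hfin : ∀ N : ℕ, 0 < N → z ^ N ≠ 1 := by
    intro N hN heq
    have h1 : Tendsto (fun i => ((r i) ^ (s i)) ^ N) (W : Filter ℕ) (𝓝 (z ^ N)) := hzt'.pow N
    have h2 : ∀ i, ‖((mu i).1) ^ (s i * N) - 1‖ ≤ ‖((r i) ^ (s i)) ^ N - 1‖ := by
      intro i
      have hp : ((r i) ^ (s i)) ^ N = (r i) ^ (s i * N) := by rw [← pow_mul]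
      have hmem : ((mu i).1) ^ (s i * N) ∈ spectrum ℂ ((r i) ^ (s i * N)) := by
        rw [spectrum.map_pow]
        exact ⟨_, (mu i).2, rfl⟩
      rw [hp]
      have := spectrum.norm_le_norm_of_mem (spec_shift hmem)
      simpa using this
    set L : ℝ := c * th0 with hLdef
    have hLlim : Tendsto (fun i : ℕ => (((s i * N : ℕ) : ℝ) * ((mu i).1).arg)) atTop
        (𝓝 ((N : ℝ) * L)) := by
      have h3 := hangle.mul_const (N : ℝ)
      have h4 : c * th0 * (N:ℝ) = (N : ℝ) * L := by rw [hLdef]; ring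
      rw [h4] at h3
      refine h3.congr fun i => ?_
      push_cast
      ring
    set F : ℝ → ℝ := fun t => ‖Complex.exp ((t:ℝ) * Complex.I) - 1‖ with hFdef
    have hFcont : Continuous F := by
      apply continuous_norm.comp
      exact (Complex.continuous_exp.comp (Complex.continuous_ofReal.mul continuous_const)).sub
        continuous_const
    have habslim : Tendsto (fun i => ‖((mu i).1) ^ (s i * N) - 1‖) atTop
        (𝓝 (F ((N:ℝ) * L))) := by
      have h4 : Tendsto (fun i : ℕ => F (((s i * N : ℕ) : ℝ) * ((mu i).1).arg)) atTop
          (𝓝 (F ((N:ℝ) * L))) := (hFcont.tendsto _).comp hLlim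
      refine h4.congr fun i => ?_
      rw [hFdef]
      simp only
      rw [← pow_exp_arg (hmuabs i) (s i * N)]
    have hδpos : 0 < F ((N:ℝ) * L) := by
      rw [hFdef]
      simp only
      refine norm_pos_iff.mpr (sub_ne_zero.mpr ?_)
      have hsg : L = 1 * (2 * π * Real.sqrt 2) ∨ L = (-1) * (2 * π * Real.sqrt 2) := by
        rw [hLdef, hcdef]
        rcases lt_or_gt_of_ne hth0ne with h | h
        · right
          rw [abs_of_neg h]
          have hd : th0 / -th0 = -1 := by rw [div_neg, div_self h.ne]
          rw [div_mul_eq_mul_div, mul_div_assoc, hd]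
          ring
        · left
          rw [abs_of_pos h]
          have hd : th0 / th0 = 1 := div_self h.ne'
          rw [div_mul_eq_mul_div, mul_div_assoc, hd]
          ring
      rcases hsg with h | h <;> rw [h]
      · exact_mod_cast final_ne_one N hN 1 (Or.inl rfl)
      · exact_mod_cast final_ne_one N hN (-1) (Or.inr rfl)
    have hnormlim : Tendsto (fun i => ‖((r i) ^ (s i)) ^ N - 1‖) (W : Filter ℕ)
        (𝓝 ‖z ^ N - 1‖) := (h1.sub tendsto_const_nhds).norm
    have hle : F ((N:ℝ) * L) ≤ ‖z ^ N - 1‖ :=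
      le_of_tendsto_of_tendsto' (habslim.mono_left hWle) hnormlim h2
    rw [heq] at hle
    simp at hle
    linarith
  -- pull back to G
  obtain ⟨g, hgG, hgz⟩ := hzS
  refine ⟨g, hgG, fun hford => ?_⟩
  obtain ⟨N, hNpos, hgN⟩ := isOfFinOrder_iff_pow_eq_one.mp hford
  apply hfin N hNpos
  calc z ^ N = (Φ g) ^ N := by rw [hgz]
    _ = psi n ((g : Matrix (Fin n) (Fin n) ℝ) ^ N) := by rw [hΦ, psi_pow]
    _ = psi n ((g ^ N : Matrix.orthogonalGroup (Fin n) ℝ) : Matrix (Fin n) (Fin n) ℝ) := by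
        rw [SubmonoidClass.coe_pow]
    _ = psi n ((1 : Matrix.orthogonalGroup (Fin n) ℝ) : Matrix (Fin n) (Fin n) ℝ) := by rw [hgN]
    _ = 1 := by rw [OneMemClass.coe_one, psi_one]
end
end
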